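/- arXiv:2007.15880 — 4 statements merged into one kernel-verified Lean document; each statement's English description precedes it below -/
import Mathlib

section
/- Let J ⊂ ℕ∖{0}, let (p_y)_{y∈J} be a probability mass function on J, let q, λ ≥ 0, and set m_y = λ p_y e^{−(q+λ)y}. Define w_q(x) = Σ_{v ∈ ℕ^J, ⟨v,J⟩ ≤ ⌊x⌋} (∏_{ℓ∈J} m_ℓ^{v_ℓ}/v_ℓ!) (⟨v,J⟩ − x)^{|v|} for x ≥ 0, where |v| = Σ_{y∈J} v_y and ⟨v,J⟩ = Σ_{y∈J} v_y·y, and only finitely supported v with ⟨v,J⟩ ≤ ⌊x⌋ contribute. Then w_q is the unique continuous solution of the recursion w_q(x) = w_q(⌊x⌋) − λ Σ_{y∈J} p_y e^{−(q+λ)y} ∫_{⌊x⌋}^x w_q(z−y) dz for x ≥ 0, with w_q(x) = 1 on [0,1] and w_q(x) = 0 for x < 0. -/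
open MeasureTheory Filter Set

/-- `W` is the `q`-scale function of a spectrally negative Lévy process with
Laplace exponent `ψ`: it vanishes on the negative half-line, is continuous on
`[0,∞)`, and its Laplace transform equals `1/(ψ(β) - q)` for `β > Φ(q)`. -/
def IsScaleFunction (ψ : ℝ → ℝ) (q : ℝ) (W : ℝ → ℝ) : Prop :=
  ContinuousOn W (Set.Ici 0) ∧ (∀ x < 0, W x = 0) ∧
    ∀ β : ℝ, sSup {y : ℝ | ψ y = q} < β →
      (∫ x in Set.Ioi (0 : ℝ), Real.exp (-β * x) * W x) = 1 / (ψ β - q)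

/-- Laplace exponent of a spectrally negative compound Poisson process with
drift `c`, intensity `lam` and jump distribution `Pm` (of the negative of the jumps). -/
noncomputable def cppExponent (c lam : ℝ) (Pm : Measure ℝ) (u : ℝ) : ℝ :=
  c * u + lam * ∫ s, (Real.exp (-u * s) - 1) ∂Pm

/-- `k`-fold convolution power of a measure on `ℝ`, with `convPow μ 0 = δ₀`. -/
noncomputable def convPow (μ : Measure ℝ) : ℕ → Measure ℝ
  | 0 => Measure.dirac 0
  | k + 1 => Measure.map (fun p : ℝ × ℝ => p.1 + p.2) ((convPow μ k).prod μ)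

/-- The kernel `g_k(s,x) = ((λ/c)^k/k!) e^{-((q+λ)/c)(s-x)} (s-x)^k`. -/
noncomputable def gker (q lam c : ℝ) (k : ℕ) (s x : ℝ) : ℝ :=
  ((lam / c) ^ k / Nat.factorial k) * Real.exp (-((q + lam) / c) * (s - x)) * (s - x) ^ k

/-- The explicit lattice solution: sum over finitely supported `v : ℕ →₀ ℕ` (jump
multiplicity vectors) with `⟨v,J⟩ ≤ ⌊x⌋` of `(∏ m_ℓ^{v_ℓ}/v_ℓ!) (⟨v,J⟩-x)^{|v|}`,
where `m_y = lam * p y * exp (-(q+lam) y)`. -/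
noncomputable def latticeW (q lam : ℝ) (p : ℕ → ℝ) (x : ℝ) : ℝ :=
  ∑' v : ℕ →₀ ℕ,
    if ((∑ y ∈ v.support, v y * y : ℕ) : ℤ) ≤ ⌊x⌋ then
      (∏ ℓ ∈ v.support,
          (lam * p ℓ * Real.exp (-(q + lam) * (ℓ : ℝ))) ^ v ℓ / (Nat.factorial (v ℓ) : ℝ)) *
        (((∑ y ∈ v.support, v y * y : ℕ) : ℝ) - x) ^ (∑ y ∈ v.support, v y)
    else 0

noncomputable section LatAux

def wsum (v : ℕ →₀ ℕ) : ℕ := ∑ y ∈ v.support, v y * y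
def deg (v : ℕ →₀ ℕ) : ℕ := ∑ y ∈ v.support, v y
def pr (q lam : ℝ) (p : ℕ → ℝ) (v : ℕ →₀ ℕ) : ℝ :=
  ∏ ℓ ∈ v.support, (lam * p ℓ * Real.exp (-(q + lam) * (ℓ : ℝ))) ^ v ℓ / (Nat.factorial (v ℓ) : ℝ)

lemma latticeW_def' (q lam : ℝ) (p : ℕ → ℝ) (x : ℝ) :
    latticeW q lam p x =
      ∑' v : ℕ →₀ ℕ, if ((wsum v : ℤ)) ≤ ⌊x⌋ then
        pr q lam p v * ((wsum v : ℝ) - x) ^ deg v else 0 := rfl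

lemma wsum_add (v w : ℕ →₀ ℕ) : wsum (v + w) = wsum v + wsum w := by
  show (v + w).sum (fun y m => m * y) = v.sum (fun y m => m*y) + w.sum (fun y m => m*y)
  exact Finsupp.sum_add_index' (by simp) (by intros; ring)

lemma deg_add (v w : ℕ →₀ ℕ) : deg (v + w) = deg v + deg w := by
  show (v + w).sum (fun _ m => m) = v.sum (fun _ m => m) + w.sum (fun _ m => m)
  exact Finsupp.sum_add_index' (by simp) (by intros; ring)

lemma wsum_single (y k : ℕ) : wsum (Finsupp.single y k) = k * y := by
  show (Finsupp.single y k).sum (fun y m => m * y) = k * y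
  exact Finsupp.sum_single_index (by simp)

lemma deg_single (y k : ℕ) : deg (Finsupp.single y k) = k := by
  show (Finsupp.single y k).sum (fun _ m => m) = k
  exact Finsupp.sum_single_index (by simp)

lemma wsum_zero' : wsum 0 = 0 := by simp [wsum]
lemma deg_zero' : deg 0 = 0 := by simp [deg]
lemma pr_zero' (q lam : ℝ) (p : ℕ → ℝ) : pr q lam p 0 = 1 := by simp [pr]

lemma deg_pos (v : ℕ →₀ ℕ) (hv : v ≠ 0) : 1 ≤ deg v := by
  obtain ⟨y, hy⟩ := Finsupp.ne_iff.mp hv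
  simp only [Finsupp.coe_zero, Pi.zero_apply] at hy
  have hys : y ∈ v.support := Finsupp.mem_support_iff.mpr hy
  calc 1 ≤ v y := Nat.one_le_iff_ne_zero.mpr hy
  _ ≤ deg v := Finset.single_le_sum (f := fun y => v y) (by intros; positivity) hys

lemma vy_le_wsum (v : ℕ →₀ ℕ) (y : ℕ) (hy : 1 ≤ y) : v y ≤ wsum v := by
  by_cases hys : y ∈ v.support
  · calc v y = v y * 1 := (Nat.mul_one _).symm
    _ ≤ v y * y := Nat.mul_le_mul_left _ hy
    _ ≤ wsum v := Finset.single_le_sum (f := fun y => v y * y) (by intros; positivity) hys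
  · simp [Finsupp.notMem_support_iff.mp hys]

lemma y_le_wsum (v : ℕ →₀ ℕ) (y : ℕ) (hy : y ∈ v.support) : y ≤ wsum v := by
  calc y ≤ v y * y := Nat.le_mul_of_pos_left y (Nat.pos_of_ne_zero (Finsupp.mem_support_iff.mp hy))
  _ ≤ wsum v := Finset.single_le_sum (f := fun y => v y * y) (by intros; positivity) hy

lemma pr_add_single (q lam : ℝ) (p : ℕ → ℝ) (v : ℕ →₀ ℕ) (y : ℕ) :
    pr q lam p (v + Finsupp.single y 1) * ((v y : ℝ) + 1) =
      (lam * p y * Real.exp (-(q + lam) * (y : ℝ))) * pr q lam p v := by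
  classical
  set c : ℕ → ℝ := fun ℓ => lam * p ℓ * Real.exp (-(q + lam) * (ℓ : ℝ)) with hc
  set g : ℕ → ℕ → ℝ := fun ℓ m => (c ℓ) ^ m / (Nat.factorial m : ℝ) with hg
  set v' := v + Finsupp.single y 1 with hv'
  have hvy' : v' y = v y + 1 := by simp [hv']
  have hysupp : y ∈ v'.support := by simp [Finsupp.mem_support_iff, hvy']
  have hsupp : v'.support = insert y v.support := by
    ext ℓ
    by_cases hℓ : ℓ = y
    · subst hℓ; simp [hysupp]
    · simp [Finsupp.mem_support_iff, hv', Finsupp.single_apply, hℓ, Ne.symm hℓ]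
  have hne : ∀ ℓ ∈ v.support.erase y, v' ℓ = v ℓ := by
    intro ℓ hℓ
    have : ℓ ≠ y := Finset.ne_of_mem_erase hℓ
    simp [hv', Finsupp.single_apply, Ne.symm this]
  have hL : pr q lam p v' = g y (v y + 1) * ∏ ℓ ∈ v.support.erase y, g ℓ (v ℓ) := by
    show (∏ ℓ ∈ v'.support, g ℓ (v' ℓ)) = _
    rw [hsupp, ← Finset.mul_prod_erase (insert y v.support) (fun ℓ => g ℓ (v' ℓ))
        (Finset.mem_insert_self y _),
      Finset.erase_insert_eq_erase, hvy']
    congr 1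
    exact Finset.prod_congr rfl (fun ℓ hℓ => by rw [hne ℓ hℓ])
  have hR : pr q lam p v = g y (v y) * ∏ ℓ ∈ v.support.erase y, g ℓ (v ℓ) := by
    show (∏ ℓ ∈ v.support, g ℓ (v ℓ)) = _
    by_cases hyv : y ∈ v.support
    · rw [← Finset.mul_prod_erase v.support (fun ℓ => g ℓ (v ℓ)) hyv]
    · rw [Finset.erase_eq_of_notMem hyv]
      have : v y = 0 := Finsupp.notMem_support_iff.mp hyv
      rw [this]
      simp [hg]
  rw [hL, hR]
  have hkey : g y (v y + 1) * ((v y : ℝ) + 1) = c y * g y (v y) := by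
    have h : (Nat.factorial (v y) : ℝ) ≠ 0 := Nat.cast_ne_zero.mpr (Nat.factorial_ne_zero _)
    simp only [hg]
    rw [Nat.factorial_succ]
    push_cast
    field_simp
    ring
  calc g y (v y + 1) * (∏ ℓ ∈ v.support.erase y, g ℓ (v ℓ)) * ((v y : ℝ) + 1)
      = (g y (v y + 1) * ((v y : ℝ) + 1)) * ∏ ℓ ∈ v.support.erase y, g ℓ (v ℓ) := by ring
    _ = (c y * g y (v y)) * ∏ ℓ ∈ v.support.erase y, g ℓ (v ℓ) := by rw [hkey]
    _ = c y * (g y (v y) * ∏ ℓ ∈ v.support.erase y, g ℓ (v ℓ)) := by ring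

lemma pr_supp (q lam : ℝ) (p : ℕ → ℝ) (v : ℕ →₀ ℕ) (hpr : pr q lam p v ≠ 0) :
    ∀ y ∈ v.support, p y ≠ 0 := by
  intro y hy hpy
  apply hpr
  apply Finset.prod_eq_zero hy
  rw [hpy]
  simp [zero_pow (Finsupp.mem_support_iff.mp hy)]

def Bnd (n : ℕ) : ℕ →₀ ℕ :=
  Finsupp.onFinset (Finset.range (n+1)) (fun y => if y ≤ n then n else 0)
    (by intro y h; simp only [Finset.mem_range]; by_contra hc; simp [Nat.le_of_lt_succ] at h hc; omega)

lemma Bnd_apply (n y : ℕ) : Bnd n y = if y ≤ n then n else 0 := rfl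

def T (n : ℕ) : Finset (ℕ →₀ ℕ) := Finset.Iic (Bnd n)

lemma T_mono {m n : ℕ} (h : m ≤ n) : T m ⊆ T n := by
  apply Finset.Iic_subset_Iic.mpr
  rw [Finsupp.le_def]
  intro y
  rw [Bnd_apply, Bnd_apply]
  split_ifs <;> omega

lemma vy_le_of_mem_T {v : ℕ →₀ ℕ} {n : ℕ} (h : v ∈ T n) (y : ℕ) : v y ≤ Bnd n y :=
  Finsupp.le_def.mp (Finset.mem_Iic.mp h) y

section Main
variable (J : Set ℕ) (hJ : (0 : ℕ) ∉ J) (p : ℕ → ℝ) (hp0 : ∀ y : ℕ, y ∉ J → p y = 0)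
  (q lam : ℝ)

include hJ hp0 in
lemma py_ne_one_le (y : ℕ) (hy : p y ≠ 0) : 1 ≤ y := by
  rcases Nat.eq_zero_or_pos y with h | h
  · subst h; exact absurd (hp0 0 hJ) hy
  · exact h

include hJ hp0 in
lemma mem_T (v : ℕ →₀ ℕ) (n : ℕ) (hpr : pr q lam p v ≠ 0) (hws : wsum v ≤ n) : v ∈ T n := by
  rw [T, Finset.mem_Iic, Finsupp.le_def]
  intro y
  by_cases hy : y ∈ v.support
  · have hpy : p y ≠ 0 := pr_supp q lam p v hpr y hy
    have hy1 : 1 ≤ y := py_ne_one_le J hJ p hp0 y hpy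
    have h1 : v y ≤ n := le_trans (vy_le_wsum v y hy1) hws
    have h2 : y ≤ n := le_trans (y_le_wsum v y hy) hws
    rw [Bnd_apply, if_pos h2]; exact h1
  · simp [Finsupp.notMem_support_iff.mp hy]

include hJ hp0 in
lemma latticeW_rep (n : ℕ) (x : ℝ) (hx : ⌊x⌋ = (n : ℤ)) :
    latticeW q lam p x =
      ∑ v ∈ T n, (if wsum v ≤ n then pr q lam p v * ((wsum v : ℝ) - x) ^ deg v else 0) := by
  rw [latticeW_def']
  rw [show (fun v : ℕ →₀ ℕ => if ((wsum v : ℤ)) ≤ ⌊x⌋ then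
        pr q lam p v * ((wsum v : ℝ) - x) ^ deg v else 0)
      = (fun v => if wsum v ≤ n then pr q lam p v * ((wsum v : ℝ) - x) ^ deg v else 0)
    from funext fun v => by rw [hx]; norm_cast]
  apply tsum_eq_sum
  intro v hv
  by_cases hw : wsum v ≤ n
  · rw [if_pos hw]
    by_contra h
    have hpr : pr q lam p v ≠ 0 := fun h0 => h (by rw [show pr q lam p v = 0 from h0]; ring)
    exact hv (mem_T J hJ p hp0 q lam v n hpr hw)
  · rw [if_neg hw]

lemma latticeW_neg (x : ℝ) (hx : x < 0) : latticeW q lam p x = 0 := by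
  rw [latticeW_def']
  convert tsum_zero with v
  rw [if_neg]
  intro h
  have h2 : ⌊x⌋ < 0 := Int.floor_lt.mpr (by simpa)
  have h3 : (0:ℤ) ≤ (wsum v : ℤ) := Int.natCast_nonneg _
  omega

include hJ hp0 in
lemma latticeW_one (x : ℝ) (hx0 : 0 ≤ x) (hx1 : x ≤ 1) : latticeW q lam p x = 1 := by
  rw [latticeW_def']
  rw [tsum_eq_single 0 ?_]
  · rw [wsum_zero', deg_zero', pr_zero', if_pos (by exact_mod_cast Int.floor_nonneg.mpr hx0)]
    simp
  · intro v hv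
    by_cases hc : ((wsum v : ℤ)) ≤ ⌊x⌋
    · rw [if_pos hc]
      by_contra h
      have hpr : pr q lam p v ≠ 0 := fun h0 => h (by rw [show pr q lam p v = 0 from h0]; ring)
      have hv0 : v 0 = 0 := by
        by_contra h0
        exact pr_supp q lam p v hpr 0 (Finsupp.mem_support_iff.mpr h0) (hp0 0 hJ)
      have hws1 : 1 ≤ wsum v := by
        obtain ⟨y, hy⟩ := Finsupp.ne_iff.mp hv
        simp only [Finsupp.coe_zero, Pi.zero_apply] at hy
        have hys : y ∈ v.support := Finsupp.mem_support_iff.mpr hy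
        have hy1 : 1 ≤ y := by
          rcases Nat.eq_zero_or_pos y with h' | h'
          · subst h'; exact absurd hv0 hy
          · exact h'
        exact le_trans hy1 (y_le_wsum v y hys)
      have hfl : ⌊x⌋ ≤ 1 := by
        calc ⌊x⌋ ≤ ⌊(1:ℝ)⌋ := Int.floor_le_floor hx1
        _ = 1 := Int.floor_one
      have hws : wsum v = 1 := by omega
      have hxeq : x = 1 := by
        have : (1:ℝ) ≤ x := by
          have : (1:ℤ) ≤ ⌊x⌋ := by omega
          calc (1:ℝ) = ((1:ℤ):ℝ) := by norm_num
          _ ≤ (⌊x⌋:ℝ) := by exact_mod_cast this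
          _ ≤ x := Int.floor_le x
        linarith
      apply h
      rw [hws, hxeq]
      norm_num
      right
      exact Nat.one_le_iff_ne_zero.mp (deg_pos v hv)
    · rw [if_neg hc]

def G (n : ℕ) (x : ℝ) : ℝ :=
  ∑ v ∈ T n, (if wsum v ≤ n then pr q lam p v * ((wsum v : ℝ) - x) ^ deg v else 0)

lemma G_cont (n : ℕ) : Continuous (G p q lam n) := by
  apply continuous_finset_sum
  intro v _
  by_cases h : wsum v ≤ n
  · simp only [if_pos h]; fun_prop
  · simp only [if_neg h]; fun_prop

include hJ hp0 in
lemma G_succ (n : ℕ) : G p q lam (n+1) ((n:ℝ)+1) = G p q lam n ((n:ℝ)+1) := by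
  rw [G, G]
  have h1 : ∀ v : ℕ →₀ ℕ,
      (if wsum v ≤ n+1 then pr q lam p v * ((wsum v : ℝ) - ((n:ℝ)+1)) ^ deg v else 0)
      = (if wsum v ≤ n then pr q lam p v * ((wsum v : ℝ) - ((n:ℝ)+1)) ^ deg v else 0) := by
    intro v
    by_cases h : wsum v ≤ n
    · rw [if_pos (by omega), if_pos h]
    · by_cases h' : wsum v ≤ n + 1
      · rw [if_pos h', if_neg h]
        have hws : wsum v = n + 1 := by omega
        have hvne : v ≠ 0 := by
          intro h0; rw [h0, wsum_zero'] at hws; omega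
        rw [hws]
        rw [show (((n+1 : ℕ)):ℝ) - ((n:ℝ)+1) = 0 by push_cast; ring]
        rw [zero_pow (Nat.one_le_iff_ne_zero.mp (deg_pos v hvne))]
        ring
      · rw [if_neg h', if_neg h]
  calc ∑ v ∈ T (n+1), (if wsum v ≤ n+1 then pr q lam p v * ((wsum v : ℝ) - ((n:ℝ)+1)) ^ deg v else 0)
      = ∑ v ∈ T (n+1), (if wsum v ≤ n then pr q lam p v * ((wsum v : ℝ) - ((n:ℝ)+1)) ^ deg v else 0) :=
        Finset.sum_congr rfl (fun v _ => h1 v)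
    _ = ∑ v ∈ T n, (if wsum v ≤ n then pr q lam p v * ((wsum v : ℝ) - ((n:ℝ)+1)) ^ deg v else 0) := by
        refine (Finset.sum_subset (T_mono (by omega)) ?_).symm
        intro v _ hvn
        by_cases hw : wsum v ≤ n
        · rw [if_pos hw]
          by_contra h
          have hpr : pr q lam p v ≠ 0 := fun h0 => h (by rw [show pr q lam p v = 0 from h0]; ring)
          exact hvn (mem_T J hJ p hp0 q lam v n hpr hw)
        · rw [if_neg hw]

def Dker (n : ℕ) (x : ℝ) (s k : ℕ) : ℝ := (((s:ℝ) - (n:ℝ))^k - ((s:ℝ) - x)^k)/(k:ℝ)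

lemma int_formula (C a b c : ℝ) (k : ℕ) :
    ∫ z in a..b, C * (c - z)^k = C * (((c-a)^(k+1) - (c-b)^(k+1))/((k:ℝ)+1)) := by
  rw [intervalIntegral.integral_const_mul]
  congr 1
  rw [intervalIntegral.integral_comp_sub_left (fun u => u^k) c, integral_pow]

lemma reindex (n y : ℕ) (hy1 : 1 ≤ y) (D : ℕ → ℕ → ℝ) :
    ∑ v ∈ T n, (if wsum v + y ≤ n then
        (lam * p y * Real.exp (-(q+lam)*(y:ℝ))) * pr q lam p v * D (wsum v + y) (deg v + 1) else 0)
    = ∑ v ∈ T n, (if wsum v ≤ n ∧ 1 ≤ v y then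
        (v y : ℝ) * pr q lam p v * D (wsum v) (deg v) else 0) := by
  classical
  rw [← Finset.sum_filter, ← Finset.sum_filter]
  refine Finset.sum_nbij' (fun v => v + Finsupp.single y 1) (fun v => v - Finsupp.single y 1)
    ?_ ?_ ?_ ?_ ?_
  · intro v hv
    rw [Finset.mem_filter] at hv ⊢
    obtain ⟨hvT, hws⟩ := hv
    have hyn : y ≤ n := le_trans (Nat.le_add_left y _) hws
    have hws' : wsum (v + Finsupp.single y 1) = wsum v + y := by
      rw [wsum_add, wsum_single, one_mul]
    refine ⟨?_, by rw [hws']; exact hws, by simp⟩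
    rw [T, Finset.mem_Iic, Finsupp.le_def]
    intro ℓ
    by_cases hℓ : ℓ = y
    · subst hℓ
      have h1 : v ℓ ≤ wsum v := vy_le_wsum v ℓ hy1
      have : ((v + Finsupp.single ℓ 1 : ℕ →₀ ℕ)) ℓ = v ℓ + 1 := by simp
      rw [this, Bnd_apply, if_pos hyn]
      omega
    · have : ((v + Finsupp.single y 1 : ℕ →₀ ℕ)) ℓ = v ℓ := by
        simp [Finsupp.single_apply, Ne.symm hℓ]
      rw [this]
      exact vy_le_of_mem_T hvT ℓ
  · intro v hv
    rw [Finset.mem_filter] at hv ⊢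
    obtain ⟨hvT, hws, hvy⟩ := hv
    have hle : Finsupp.single y 1 ≤ v := Finsupp.single_le_iff.mpr hvy
    have hcanc : (v - Finsupp.single y 1) + Finsupp.single y 1 = v := tsub_add_cancel_of_le hle
    refine ⟨?_, ?_⟩
    · show v - Finsupp.single y 1 ∈ T n
      rw [T, Finset.mem_Iic]
      exact le_trans tsub_le_self (Finset.mem_Iic.mp hvT)
    · show wsum (v - Finsupp.single y 1) + y ≤ n
      have : wsum v = wsum (v - Finsupp.single y 1) + y := by
        conv_lhs => rw [← hcanc]
        rw [wsum_add, wsum_single, one_mul]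
      omega
  · intro v _
    exact add_tsub_cancel_right v (Finsupp.single y 1)
  · intro v hv
    rw [Finset.mem_filter] at hv
    exact tsub_add_cancel_of_le (Finsupp.single_le_iff.mpr hv.2.2)
  · intro v hv
    have h1 : wsum (v + Finsupp.single y 1) = wsum v + y := by
      rw [wsum_add, wsum_single, one_mul]
    have h2 : deg (v + Finsupp.single y 1) = deg v + 1 := by
      rw [deg_add, deg_single]
    have h3 : ((v + Finsupp.single y 1 : ℕ →₀ ℕ)) y = v y + 1 := by simp
    rw [h1, h2, h3]
    rw [show (((v y + 1 : ℕ)):ℝ) = (v y : ℝ) + 1 by push_cast; ring]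
    rw [show ((v y : ℝ) + 1) * pr q lam p (v + Finsupp.single y 1) * D (wsum v + y) (deg v + 1)
        = (pr q lam p (v + Finsupp.single y 1) * ((v y : ℝ) + 1)) * D (wsum v + y) (deg v + 1)
      by ring]
    rw [pr_add_single]

include hJ hp0 in
lemma collect (n : ℕ) (x : ℝ) (F : Finset ℕ) (hF : ∀ y, p y ≠ 0 → 1 ≤ y → y ≤ n → y ∈ F)
    (v : ℕ →₀ ℕ) (hv : v ∈ T n) :
    ∑ y ∈ F, (if wsum v ≤ n ∧ 1 ≤ v y then
        (v y : ℝ) * pr q lam p v * Dker n x (wsum v) (deg v) else 0)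
    = if wsum v ≤ n then
        pr q lam p v * (((wsum v : ℝ) - (n:ℝ))^(deg v) - ((wsum v : ℝ) - x)^(deg v)) else 0 := by
  classical
  by_cases hw : wsum v ≤ n
  · by_cases hpr : pr q lam p v = 0
    · simp [hpr]
    · rw [if_pos hw]
      have hsupp : F.filter (fun y => 1 ≤ v y) = v.support := by
        ext y
        simp only [Finset.mem_filter, Finsupp.mem_support_iff]
        constructor
        · rintro ⟨_, h⟩; omega
        · intro h
          have hy1 : 1 ≤ v y := Nat.one_le_iff_ne_zero.mpr h
          have hpy : p y ≠ 0 := pr_supp q lam p v hpr y (Finsupp.mem_support_iff.mpr h)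
          have hyn : y ≤ n := by
            have := vy_le_of_mem_T hv y
            rw [Bnd_apply] at this
            by_contra hc
            rw [if_neg (by omega)] at this
            omega
          have hy1' : 1 ≤ y := by
            rcases Nat.eq_zero_or_pos y with h0 | h0
            · subst h0; exact absurd (hp0 0 hJ) hpy
            · exact h0
          exact ⟨hF y hpy hy1' hyn, hy1⟩
      calc ∑ y ∈ F, (if wsum v ≤ n ∧ 1 ≤ v y then
              (v y : ℝ) * pr q lam p v * Dker n x (wsum v) (deg v) else 0)
          = ∑ y ∈ F, (if 1 ≤ v y then
              (v y : ℝ) * (pr q lam p v * Dker n x (wsum v) (deg v)) else 0) := by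
            refine Finset.sum_congr rfl fun y _ => ?_
            by_cases h : 1 ≤ v y
            · rw [if_pos ⟨hw, h⟩, if_pos h]; ring
            · rw [if_neg (by tauto), if_neg h]
        _ = ∑ y ∈ F.filter (fun y => 1 ≤ v y),
              (v y : ℝ) * (pr q lam p v * Dker n x (wsum v) (deg v)) := by
            rw [Finset.sum_filter]
        _ = ∑ y ∈ v.support, (v y : ℝ) * (pr q lam p v * Dker n x (wsum v) (deg v)) := by
            rw [hsupp]
        _ = (deg v : ℝ) * (pr q lam p v * Dker n x (wsum v) (deg v)) := by
            rw [← Finset.sum_mul]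
            congr 1
            rw [deg]
            push_cast
            rfl
        _ = pr q lam p v * (((wsum v : ℝ) - (n:ℝ))^(deg v) - ((wsum v : ℝ) - x)^(deg v)) := by
            rw [Dker]
            rcases Nat.eq_zero_or_pos (deg v) with h | h
            · rw [h]; norm_num
            · have hd : ((deg v : ℝ)) ≠ 0 := Nat.cast_ne_zero.mpr (by omega)
              field_simp
  · rw [if_neg hw]
    apply Finset.sum_eq_zero
    intro y _
    rw [if_neg (by tauto)]

include hJ hp0 in
lemma latticeW_rec (x : ℝ) (hx : 0 ≤ x) :
    latticeW q lam p x = latticeW q lam p (⌊x⌋ : ℝ) -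
      lam * ∑' y : ℕ, p y * Real.exp (-(q + lam) * (y : ℝ)) *
        ∫ z in ((⌊x⌋ : ℝ))..x, latticeW q lam p (z - (y : ℝ)) := by
  classical
  set n : ℕ := ⌊x⌋.toNat with hn
  have hfl : ⌊x⌋ = (n : ℤ) := by rw [hn]; exact (Int.toNat_of_nonneg (Int.floor_nonneg.mpr hx)).symm
  have hflR : ((⌊x⌋ : ℤ) : ℝ) = (n : ℝ) := by rw [hfl]; norm_num
  have hnx : (n : ℝ) ≤ x := by rw [← hflR]; exact Int.floor_le x
  have hxn : x < (n : ℝ) + 1 := by rw [← hflR]; exact Int.lt_floor_add_one x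
  rw [hflR]
  set F : Finset ℕ := (Finset.range (n+1)).filter (fun y => p y ≠ 0) with hFdef
  have hFmem : ∀ y ∈ F, p y ≠ 0 ∧ 1 ≤ y ∧ y ≤ n := by
    intro y hy
    rw [hFdef, Finset.mem_filter, Finset.mem_range] at hy
    have hy1 : 1 ≤ y := by
      rcases Nat.eq_zero_or_pos y with h0 | h0
      · exact absurd (h0 ▸ hy.2) (fun h => h (h0 ▸ hp0 0 hJ))
      · exact h0
    exact ⟨hy.2, hy1, by omega⟩
  -- Step 1 : tsum to finite sum
  have htsum : (∑' y : ℕ, p y * Real.exp (-(q + lam) * (y : ℝ)) *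
        ∫ z in ((n : ℝ))..x, latticeW q lam p (z - (y : ℝ)))
      = ∑ y ∈ F, p y * Real.exp (-(q + lam) * (y : ℝ)) *
        ∫ z in ((n : ℝ))..x, latticeW q lam p (z - (y : ℝ)) := by
    apply tsum_eq_sum
    intro y hy
    rw [hFdef, Finset.mem_filter, Finset.mem_range] at hy
    rw [not_and_or, not_lt, not_not] at hy
    rcases hy with hy | hy
    · have hzero : (∫ z in ((n : ℝ))..x, latticeW q lam p (z - (y : ℝ))) = 0 := by
        have heq : Set.EqOn (fun z => latticeW q lam p (z - (y : ℝ))) (fun _ => (0:ℝ))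
            (Set.uIcc ((n:ℝ)) x) := by
          intro z hz
          rw [Set.uIcc_of_le hnx] at hz
          show latticeW q lam p (z - (y:ℝ)) = 0
          apply latticeW_neg
          have hy' : (n:ℝ) + 1 ≤ (y:ℝ) := by exact_mod_cast hy
          have := hz.2
          linarith
        rw [intervalIntegral.integral_congr heq]
        simp
      rw [hzero, mul_zero]
    · rw [hy]; ring
  rw [htsum]
  -- Step 2 : per-y integral evaluation
  have hint : ∀ y ∈ F, (∫ z in ((n : ℝ))..x, latticeW q lam p (z - (y : ℝ)))
      = ∑ v ∈ T n, (if wsum v + y ≤ n then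
          pr q lam p v * Dker n x (wsum v + y) (deg v + 1) else 0) := by
    intro y hy
    obtain ⟨hpy, hy1, hyn⟩ := hFmem y hy
    have hcongr : ∀ z ∈ Set.uIcc ((n:ℝ)) x, latticeW q lam p (z - (y:ℝ))
        = ∑ v ∈ T n, (if wsum v + y ≤ n then
            pr q lam p v * (((wsum v + y : ℕ) : ℝ) - z) ^ (deg v) else 0) := by
      intro z hz
      rw [Set.uIcc_of_le hnx] at hz
      obtain ⟨hz1, hz2⟩ := hz
      have hfloor : ⌊z - (y:ℝ)⌋ = ((n - y : ℕ) : ℤ) := by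
        rw [Int.floor_eq_iff]
        constructor
        · push_cast [Nat.cast_sub hyn]
          linarith
        · push_cast [Nat.cast_sub hyn]
          linarith
      rw [latticeW_rep J hJ p hp0 q lam (n - y) (z - (y:ℝ)) hfloor]
      rw [Finset.sum_subset (T_mono (Nat.sub_le n y))]
      · apply Finset.sum_congr rfl
        intro v _
        by_cases hc : wsum v + y ≤ n
        · rw [if_pos (show wsum v ≤ n - y by omega), if_pos hc]
          congr 1
          rw [show (((wsum v + y : ℕ)):ℝ) = (wsum v : ℝ) + (y:ℝ) by push_cast; ring]
          ring_nf
        · rw [if_neg (show ¬ wsum v ≤ n - y by omega), if_neg hc]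
      · intro v _ hvn
        by_cases hw : wsum v ≤ n - y
        · rw [if_pos hw]
          by_contra h
          have hpr : pr q lam p v ≠ 0 := fun h0 => h (by rw [show pr q lam p v = 0 from h0]; ring)
          exact hvn (mem_T J hJ p hp0 q lam v (n - y) hpr hw)
        · rw [if_neg hw]
    rw [intervalIntegral.integral_congr hcongr]
    rw [intervalIntegral.integral_finset_sum]
    · apply Finset.sum_congr rfl
      intro v _
      by_cases hc : wsum v + y ≤ n
      · simp only [if_pos hc]
        rw [int_formula (pr q lam p v) ((n:ℝ)) x (((wsum v + y : ℕ)):ℝ) (deg v)]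
        rw [Dker]
        congr 2
        push_cast
        ring
      · simp only [if_neg hc]
        exact intervalIntegral.integral_zero
    · intro v _
      by_cases hc : wsum v + y ≤ n
      · simp only [if_pos hc]
        exact (Continuous.intervalIntegrable (by fun_prop) _ _)
      · simp only [if_neg hc]
        exact intervalIntegrable_const
  -- Step 3 : reassemble
  have hstep3 : lam * ∑ y ∈ F, p y * Real.exp (-(q + lam) * (y : ℝ)) *
        (∑ v ∈ T n, (if wsum v + y ≤ n then
          pr q lam p v * Dker n x (wsum v + y) (deg v + 1) else 0))
      = ∑ v ∈ T n, (if wsum v ≤ n then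
          pr q lam p v * (((wsum v : ℝ) - (n:ℝ))^(deg v) - ((wsum v : ℝ) - x)^(deg v)) else 0) := by
    rw [Finset.mul_sum]
    calc ∑ y ∈ F, lam * (p y * Real.exp (-(q + lam) * (y : ℝ)) *
            ∑ v ∈ T n, (if wsum v + y ≤ n then
              pr q lam p v * Dker n x (wsum v + y) (deg v + 1) else 0))
        = ∑ y ∈ F, ∑ v ∈ T n, (if wsum v + y ≤ n then
            (lam * p y * Real.exp (-(q+lam)*(y:ℝ))) * pr q lam p v *
              Dker n x (wsum v + y) (deg v + 1) else 0) := by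
          refine Finset.sum_congr rfl fun y _ => ?_
          rw [Finset.mul_sum, Finset.mul_sum]
          refine Finset.sum_congr rfl fun v _ => ?_
          by_cases hc : wsum v + y ≤ n
          · rw [if_pos hc, if_pos hc]; ring
          · rw [if_neg hc, if_neg hc]; ring
      _ = ∑ y ∈ F, ∑ v ∈ T n, (if wsum v ≤ n ∧ 1 ≤ v y then
            (v y : ℝ) * pr q lam p v * Dker n x (wsum v) (deg v) else 0) := by
          refine Finset.sum_congr rfl fun y hy => ?_
          exact reindex p q lam n y (hFmem y hy).2.1 (Dker n x)
      _ = ∑ v ∈ T n, ∑ y ∈ F, (if wsum v ≤ n ∧ 1 ≤ v y then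
            (v y : ℝ) * pr q lam p v * Dker n x (wsum v) (deg v) else 0) := Finset.sum_comm
      _ = ∑ v ∈ T n, (if wsum v ≤ n then
            pr q lam p v * (((wsum v : ℝ) - (n:ℝ))^(deg v) - ((wsum v : ℝ) - x)^(deg v)) else 0) := by
          refine Finset.sum_congr rfl fun v hv => ?_
          exact collect J hJ p hp0 q lam n x F
            (fun y h1 h2 h3 => by rw [hFdef, Finset.mem_filter, Finset.mem_range]; exact ⟨by omega, h1⟩) v hv
  -- Step 4 : final assembly
  rw [show (∑ y ∈ F, p y * Real.exp (-(q + lam) * (y : ℝ)) *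
        ∫ z in ((n : ℝ))..x, latticeW q lam p (z - (y : ℝ)))
      = ∑ y ∈ F, p y * Real.exp (-(q + lam) * (y : ℝ)) *
        (∑ v ∈ T n, (if wsum v + y ≤ n then
          pr q lam p v * Dker n x (wsum v + y) (deg v + 1) else 0))
    from Finset.sum_congr rfl fun y hy => by rw [hint y hy]]
  rw [hstep3]
  rw [latticeW_rep J hJ p hp0 q lam n x hfl,
    latticeW_rep J hJ p hp0 q lam n ((n:ℝ)) (by rw [Int.floor_natCast])]
  rw [← Finset.sum_sub_distrib]
  refine Finset.sum_congr rfl fun v _ => ?_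
  by_cases hc : wsum v ≤ n
  · rw [if_pos hc, if_pos hc, if_pos hc]; ring
  · rw [if_neg hc, if_neg hc, if_neg hc]; ring

include hJ hp0 in
lemma uniqueness (u : ℝ → ℝ) (hu_cont : ContinuousOn u (Set.Ici 0))
    (hu_neg : ∀ x : ℝ, x < 0 → u x = 0) (hu_one : ∀ x ∈ Set.Icc (0 : ℝ) 1, u x = 1)
    (hu_rec : ∀ x : ℝ, 0 ≤ x →
      u x = u (⌊x⌋ : ℝ) -
        lam * ∑' y : ℕ, p y * Real.exp (-(q + lam) * (y : ℝ)) *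
          ∫ z in ((⌊x⌋ : ℝ))..x, u (z - (y : ℝ))) :
    ∀ x : ℝ, u x = latticeW q lam p x := by
  have key : ∀ n : ℕ, ∀ x : ℝ, x < (n:ℝ) + 1 → u x = latticeW q lam p x := by
    intro n
    induction n with
    | zero =>
      intro x hx
      rcases lt_or_ge x 0 with h | h
      · rw [hu_neg x h, latticeW_neg p q lam x h]
      · simp only [Nat.cast_zero, zero_add] at hx
        rw [hu_one x ⟨h, le_of_lt hx⟩, latticeW_one J hJ p hp0 q lam x h (le_of_lt hx)]
    | succ n ih =>
      intro x hx
      push_cast at hx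
      rcases lt_or_ge x ((n:ℝ)+1) with h | h
      · exact ih x h
      have hicosub : Set.Ico ((n:ℝ)) ((n:ℝ)+1) ⊆ Set.Ici (0:ℝ) := by
        intro z hz
        have : (0:ℝ) ≤ (n:ℝ) := Nat.cast_nonneg n
        exact le_trans this hz.1
      have hun1 : u ((n:ℝ)+1) = latticeW q lam p ((n:ℝ)+1) := by
        have hnb : (nhdsWithin ((n:ℝ)+1) (Set.Ico ((n:ℝ)) ((n:ℝ)+1))).NeBot := by
          rw [← mem_closure_iff_nhdsWithin_neBot, closure_Ico (by norm_num : (n:ℝ) ≠ (n:ℝ)+1)]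
          exact ⟨by linarith, le_refl _⟩
        have h1 : Tendsto u (nhdsWithin ((n:ℝ)+1) (Set.Ico ((n:ℝ)) ((n:ℝ)+1)))
            (nhds (u ((n:ℝ)+1))) := by
          have hc : ContinuousWithinAt u (Set.Ici 0) ((n:ℝ)+1) :=
            hu_cont ((n:ℝ)+1) (by simp only [Set.mem_Ici]; positivity)
          exact hc.tendsto.mono_left (nhdsWithin_mono _ hicosub)
        have h2 : Tendsto (G p q lam n) (nhdsWithin ((n:ℝ)+1) (Set.Ico ((n:ℝ)) ((n:ℝ)+1)))
            (nhds (G p q lam n ((n:ℝ)+1))) :=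
          ((G_cont p q lam n).tendsto _).mono_left nhdsWithin_le_nhds
        have heqn : ∀ z ∈ Set.Ico ((n:ℝ)) ((n:ℝ)+1), u z = G p q lam n z := by
          intro z hz
          rw [ih z hz.2]
          rw [latticeW_rep J hJ p hp0 q lam n z ?_]
          · rfl
          · rw [Int.floor_eq_iff]
            exact ⟨by exact_mod_cast hz.1, by exact_mod_cast hz.2⟩
        have h3 : Tendsto (G p q lam n) (nhdsWithin ((n:ℝ)+1) (Set.Ico ((n:ℝ)) ((n:ℝ)+1)))
            (nhds (u ((n:ℝ)+1))) := by
          apply Filter.Tendsto.congr' ?_ h1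
          filter_upwards [self_mem_nhdsWithin] with z hz
          exact heqn z hz
        have huG : u ((n:ℝ)+1) = G p q lam n ((n:ℝ)+1) := tendsto_nhds_unique h3 h2
        rw [huG]
        rw [latticeW_rep J hJ p hp0 q lam (n+1) ((n:ℝ)+1)
          (by rw [show ((n:ℝ)+1) = (((n+1:ℕ)):ℝ) by push_cast; ring, Int.floor_natCast])]
        exact (G_succ J hJ p hp0 q lam n).symm
      rcases eq_or_lt_of_le h with heq | hlt
      · rw [← heq]; exact hun1
      · have hx0 : (0:ℝ) ≤ x := by
          have : (0:ℝ) ≤ (n:ℝ) := Nat.cast_nonneg n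
          linarith
        have hfl : ⌊x⌋ = ((n:ℤ)+1) := by
          rw [Int.floor_eq_iff]
          constructor
          · push_cast; linarith
          · push_cast; linarith
        have hflR : ((⌊x⌋:ℤ):ℝ) = (n:ℝ)+1 := by rw [hfl]; push_cast; ring
        rw [hu_rec x hx0, latticeW_rec J hJ p hp0 q lam x hx0, hflR]
        rw [hun1]
        congr 2
        apply tsum_congr
        intro y
        by_cases hpy : p y = 0
        · rw [hpy]; ring
        · have hy1 : 1 ≤ y := by
            rcases Nat.eq_zero_or_pos y with h0 | h0
            · exact absurd (h0 ▸ hp0 0 hJ) (h0 ▸ hpy)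
            · exact h0
          congr 1
          apply intervalIntegral.integral_congr
          intro z hz
          rw [Set.uIcc_of_le (by linarith : (n:ℝ)+1 ≤ x)] at hz
          show u (z - (y:ℝ)) = latticeW q lam p (z - (y:ℝ))
          apply ih
          have hy' : (1:ℝ) ≤ (y:ℝ) := by exact_mod_cast hy1
          have := hz.2
          linarith
  intro x
  rcases lt_or_ge x 0 with h | h
  · rw [hu_neg x h, latticeW_neg p q lam x h]
  · apply key ⌊x⌋.toNat x
    have h1 : x < (⌊x⌋:ℝ) + 1 := Int.lt_floor_add_one x
    have h2 : ((⌊x⌋.toNat : ℕ):ℝ) = ((⌊x⌋:ℤ):ℝ) := by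
      exact_mod_cast congrArg (fun m : ℤ => (m:ℝ)) (Int.toNat_of_nonneg (Int.floor_nonneg.mpr h))
    linarith
end Main
end LatAux

/-- `latticeW q lam p` is the unique continuous solution of the recursion
`w x = w ⌊x⌋ - λ ∑_{y∈J} p_y e^{-(q+λ)y} ∫_{⌊x⌋}^x w (z-y) dz` with `w = 1` on `[0,1]`
and `w = 0` on the negative half-line. -/
theorem latticeW_recursion (J : Set ℕ) (hJ : (0 : ℕ) ∉ J)
    (p : ℕ → ℝ) (hp0 : ∀ y : ℕ, y ∉ J → p y = 0) (hpnn : ∀ y : ℕ, 0 ≤ p y)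
    (hpsum : (∑' y : ℕ, p y) = 1) (q lam : ℝ) (hq : 0 ≤ q) (hlam : 0 ≤ lam) :
    (∀ x : ℝ, 0 ≤ x →
      latticeW q lam p x = latticeW q lam p (⌊x⌋ : ℝ) -
        lam * ∑' y : ℕ, p y * Real.exp (-(q + lam) * (y : ℝ)) *
          ∫ z in ((⌊x⌋ : ℝ))..x, latticeW q lam p (z - (y : ℝ))) ∧
    (∀ x ∈ Set.Icc (0 : ℝ) 1, latticeW q lam p x = 1) ∧
    (∀ x : ℝ, x < 0 → latticeW q lam p x = 0) ∧
    ∀ u : ℝ → ℝ, ContinuousOn u (Set.Ici 0) →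
      (∀ x : ℝ, x < 0 → u x = 0) → (∀ x ∈ Set.Icc (0 : ℝ) 1, u x = 1) →
      (∀ x : ℝ, 0 ≤ x →
        u x = u (⌊x⌋ : ℝ) -
          lam * ∑' y : ℕ, p y * Real.exp (-(q + lam) * (y : ℝ)) *
            ∫ z in ((⌊x⌋ : ℝ))..x, u (z - (y : ℝ))) →
      ∀ x : ℝ, u x = latticeW q lam p x := by
  exact ⟨fun x hx => latticeW_rec J hJ p hp0 q lam x hx,
    fun x hx => latticeW_one J hJ p hp0 q lam x hx.1 hx.2,
    fun x hx => latticeW_neg p q lam x hx,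
    fun u hc hn h1 hr => uniqueness J hJ p hp0 q lam u hc hn h1 hr⟩
end

section
/- Let F be a cumulative distribution function on ℝ with F(0) = 0, and for k ≥ 1 define G_k(x) = ∫_{[0,x]} g_k(s,x) dF^{*k}(s), where g_k(s,x) = ((λ/c)^k/k!) e^{−((q+λ)/c)(s−x)}(s−x)^k. Then for all x ≥ 0 the right derivative satisfies ∂_+ G_k(x) = ∫_{[0,x]} ∂_x g_k(s,x) dF^{*k}(s). The left derivative differs from the right derivative at a point x_0 > 0 if and only if k = 1 and F has a jump at x_0, in which case ∂_− G_1(x_0) = ∫_{[0,x_0)} ∂_x g_1(s,x_0) dF(s). -/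
/-!
Split `∫_{[0,t]} g(s,t) dν(s)` at `x`: an integral over a fixed set, differentiated under the
integral sign, plus an integral over the part of the interval between `x` and `t` that misses `x`.
Since `g(s,s) = 0`, the mean value theorem bounds `g(s,t)` by `M |t - x|` there, and the measure
of that punctured interval tends to `0`, so the moving part is `o(t - x)` from both sides.
To the right of `x` the fixed set is `[0,x]`; to the left it is `[0,x)`, and the two candidate
derivatives differ by `ν{x} ∂ₓg(x,x)`, which is `-(λ/c) ν{x}` for `k = 1` and `0` for
`k ≥ 2`.
-/

open MeasureTheory Filter Set

open Topology Asymptotics Metric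

theorem tendsto_measure_uIcc_diff_singleton (ν : Measure ℝ) [IsLocallyFiniteMeasure ν]
    (x : ℝ) :
    Tendsto (fun t => ν (uIcc x t \ {x})) (𝓝 x) (𝓝 0) := by
  have hempty : ⋂ r > (0 : ℝ), closedBall x r \ {x} = ∅ := by
    refine eq_empty_of_forall_notMem fun s hs => ?_
    rw [mem_iInter₂] at hs
    exact (hs 1 one_pos).2 (eq_of_forall_dist_le fun r hr => (hs r hr).1)
  have hlim : Tendsto (fun r => ν (closedBall x r \ {x})) (𝓝[>] 0) (𝓝 0) := by
    have hfin : ν (closedBall x 1 \ {x}) ≠ ⊤ :=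
      ((measure_mono sdiff_subset).trans_lt (isCompact_closedBall x 1).measure_lt_top).ne
    have h := tendsto_measure_biInter_gt (μ := ν) (s := fun r => closedBall x r \ {x}) (a := 0)
      (fun r _ => (measurableSet_closedBall.diff (measurableSet_singleton x)).nullMeasurableSet)
      (fun i j _ hij => sdiff_subset_sdiff_left (closedBall_subset_closedBall hij))
      ⟨1, one_pos, hfin⟩
    rwa [hempty, measure_empty] at h
  rw [ENNReal.tendsto_nhds_zero] at hlim ⊢
  intro ε hε
  obtain ⟨r, hrε, hr⟩ := ((hlim ε hε).and self_mem_nhdsWithin).exists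
  filter_upwards [closedBall_mem_nhds x hr] with t ht
  exact (measure_mono (sdiff_subset_sdiff_left
    ((convex_closedBall x r).ordConnected.uIcc_subset (mem_closedBall_self hr.le) ht))).trans hrε

section ParametricIntegral

variable {E : Type*} [NormedAddCommGroup E] [NormedSpace ℝ E] {ν : Measure ℝ}
  {f f' : ℝ → ℝ → E}

theorem norm_le_mul_abs_sub_of_diag_eq_zero (hderiv : ∀ s t, HasDerivAt (f s) (f' s t) t)
    (hdiag : ∀ s, f s s = 0) {K : Set ℝ} (hK : Convex ℝ K) {M : ℝ}
    (hM : ∀ s ∈ K, ∀ u ∈ K, ‖f' s u‖ ≤ M) {s t : ℝ} (hs : s ∈ K) (ht : t ∈ K) :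
    ‖f s t‖ ≤ M * |t - s| := by
  simpa [hdiag] using hK.norm_image_sub_le_of_norm_hasDerivWithin_le
    (fun u _ => (hderiv s u).hasDerivWithinAt) (hM s hs) hs ht

theorem hasDerivAt_setIntegral_of_subset_uIcc_diff_singleton [IsLocallyFiniteMeasure ν]
    (hf' : Continuous (Function.uncurry f')) (hderiv : ∀ s t, HasDerivAt (f s) (f' s t) t)
    (hdiag : ∀ s, f s s = 0) {S : ℝ → Set ℝ} {x : ℝ}
    (hS : ∀ t, S t ⊆ uIcc x t \ {x}) :
    HasDerivAt (fun t => ∫ s in S t, f s t ∂ν) 0 x := by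
  have hx : x ∈ closedBall x 1 := mem_closedBall_self zero_le_one
  obtain ⟨M, hM⟩ := ((isCompact_closedBall x 1).prod (isCompact_closedBall x 1))
    |>.exists_bound_of_continuousOn hf'.continuousOn
  have hM0 : 0 ≤ M := (norm_nonneg _).trans (hM (x, x) ⟨hx, hx⟩)
  have hbound : ∀ t ∈ closedBall x 1, ∀ s ∈ S t, ‖f s t‖ ≤ M * |t - x| := by
    intro t ht s hs
    have hs' : s ∈ uIcc x t := (hS t hs).1
    calc ‖f s t‖ ≤ M * |t - s| :=
          norm_le_mul_abs_sub_of_diag_eq_zero hderiv hdiag (convex_closedBall x 1)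
            (fun s hs u hu => hM (s, u) ⟨hs, hu⟩)
            ((convex_closedBall x 1).ordConnected.uIcc_subset hx ht hs') ht
      _ ≤ M * |t - x| := mul_le_mul_of_nonneg_left (abs_sub_right_of_mem_uIcc hs') hM0
  have hSx : S x = ∅ := by simpa using hS x
  rw [hasDerivAt_iff_isLittleO, hSx]
  simp only [Measure.restrict_empty, integral_zero_measure, sub_zero, smul_zero]
  refine IsBigO.trans_isLittleO (g := fun t => ν.real (uIcc x t \ {x}) * (t - x)) ?_ ?_
  · refine IsBigO.of_bound M ?_
    filter_upwards [closedBall_mem_nhds x one_pos] with t ht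
    have hfin : ν (uIcc x t \ {x}) < ⊤ :=
      (measure_mono sdiff_subset).trans_lt isCompact_uIcc.measure_lt_top
    calc ‖∫ s in S t, f s t ∂ν‖ ≤ M * |t - x| * ν.real (S t) :=
          norm_setIntegral_le_of_norm_le_const ((measure_mono (hS t)).trans_lt hfin) (hbound t ht)
      _ ≤ M * |t - x| * ν.real (uIcc x t \ {x}) :=
          mul_le_mul_of_nonneg_left (measureReal_mono (hS t) hfin.ne) (by positivity)
      _ = M * ‖ν.real (uIcc x t \ {x}) * (t - x)‖ := by
          rw [norm_mul, Real.norm_eq_abs, Real.norm_eq_abs, abs_of_nonneg measureReal_nonneg]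
          ring
  · have hν : Tendsto (fun t => ν.real (uIcc x t \ {x})) (𝓝 x) (𝓝 0) :=
      (ENNReal.tendsto_toReal ENNReal.zero_ne_top).comp (tendsto_measure_uIcc_diff_singleton ν x)
    simpa using (isLittleO_one_iff ℝ).2 hν |>.mul_isBigO (isBigO_refl (fun t => t - x) (𝓝 x))

theorem hasDerivAt_setIntegral_of_isBounded [IsLocallyFiniteMeasure ν] {A : Set ℝ}
    (hA : Bornology.IsBounded A) (hf : ∀ t, Continuous (f · t))
    (hf' : Continuous (Function.uncurry f')) (hderiv : ∀ s t, HasDerivAt (f s) (f' s t) t)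
    (x : ℝ) : HasDerivAt (fun t => ∫ s in A, f s t ∂ν) (∫ s in A, f' s x ∂ν) x := by
  have hK := hA.isCompact_closure
  obtain ⟨M, hM⟩ := (hK.prod (isCompact_closedBall x 1)).exists_bound_of_continuousOn
    hf'.continuousOn
  have : IsFiniteMeasure (ν.restrict A) :=
    isFiniteMeasure_restrict.2 ((measure_mono subset_closure).trans_lt hK.measure_lt_top).ne
  refine (hasDerivAt_integral_of_dominated_loc_of_deriv_le (ball_mem_nhds x one_pos)
    (Eventually.of_forall fun t => (hf t).aestronglyMeasurable)
    (((hf x).continuousOn.integrableOn_compact hK).mono_set subset_closure)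
    ((hf'.comp (continuous_id.prodMk continuous_const)).aestronglyMeasurable) ?_
    (integrable_const M) (Eventually.of_forall fun s t _ => hderiv s t)).2
  filter_upwards [ae_restrict_of_ae_restrict_of_subset subset_closure
    (ae_restrict_mem isClosed_closure.measurableSet)] with s hs t ht
  exact hM (s, t) ⟨hs, ball_subset_closedBall ht⟩

theorem setIntegral_Icc_eq_setIntegral_Ico_add [CompleteSpace E] {g : ℝ → E} {a x : ℝ}
    (hax : a ≤ x) (hg : IntegrableOn g (Icc a x) ν) :
    ∫ s in Icc a x, g s ∂ν = ∫ s in Ico a x, g s ∂ν + ν.real {x} • g x := by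
  rw [← Ico_union_right hax, setIntegral_union (by simp) (measurableSet_singleton x)
    (hg.mono_set Ico_subset_Icc_self) (hg.mono_set (by simpa using hax)), integral_singleton]

theorem hasDerivWithinAt_Ici_setIntegral_Icc [IsLocallyFiniteMeasure ν]
    (hf : ∀ t, Continuous (f · t)) (hf' : Continuous (Function.uncurry f'))
    (hderiv : ∀ s t, HasDerivAt (f s) (f' s t) t) (hdiag : ∀ s, f s s = 0) {a x : ℝ}
    (hax : a ≤ x) :
    HasDerivWithinAt (fun t => ∫ s in Icc a t, f s t ∂ν) (∫ s in Icc a x, f' s x ∂ν)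
      (Ici x) x := by
  have hfixed := hasDerivAt_setIntegral_of_isBounded (ν := ν) (isBounded_Icc a x) hf hf' hderiv x
  have hmoving := hasDerivAt_setIntegral_of_subset_uIcc_diff_singleton (ν := ν) hf' hderiv hdiag
    (S := fun t => Ioc x t) fun t s hs => ⟨Icc_subset_uIcc (Ioc_subset_Icc_self hs), hs.1.ne'⟩
  refine (add_zero (∫ s in Icc a x, f' s x ∂ν) ▸ (hfixed.add hmoving).hasDerivWithinAt)
    |>.congr_of_mem (fun t (ht : x ≤ t) => ?_) self_mem_Ici
  rw [Pi.add_apply, ← setIntegral_union (disjoint_left.2 fun s hs hs' => hs'.1.not_ge hs.2)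
    measurableSet_Ioc (hf t).integrableOn_Icc
    ((hf t).integrableOn_Icc.mono_set Ioc_subset_Icc_self), Icc_union_Ioc_eq_Icc hax ht]

theorem hasDerivWithinAt_Iic_setIntegral_Icc [CompleteSpace E] [IsLocallyFiniteMeasure ν]
    (hf : ∀ t, Continuous (f · t)) (hf' : Continuous (Function.uncurry f'))
    (hderiv : ∀ s t, HasDerivAt (f s) (f' s t) t) (hdiag : ∀ s, f s s = 0) {a x : ℝ}
    (hax : a < x) :
    HasDerivWithinAt (fun t => ∫ s in Icc a t, f s t ∂ν) (∫ s in Ico a x, f' s x ∂ν)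
      (Iic x) x := by
  have hfixed := hasDerivAt_setIntegral_of_isBounded (ν := ν) (isBounded_Ico a x) hf hf' hderiv x
  have hmoving := hasDerivAt_setIntegral_of_subset_uIcc_diff_singleton (ν := ν) hf' hderiv hdiag
    (S := fun t => Ioo t x) fun t s hs => ⟨Icc_subset_uIcc' (Ioo_subset_Icc_self hs), hs.2.ne⟩
  refine (sub_zero (∫ s in Ico a x, f' s x ∂ν) ▸ (hfixed.sub hmoving).hasDerivWithinAt)
    |>.congr_of_eventuallyEq_of_mem ?_ self_mem_Iic
  filter_upwards [self_mem_nhdsWithin, nhdsWithin_le_nhds (Ioi_mem_nhds hax)]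
    with t (htx : t ≤ x) (hat : a < t)
  rcases htx.lt_or_eq with htx | rfl
  · rw [Pi.sub_apply, eq_sub_iff_add_eq,
      ← setIntegral_union (disjoint_left.2 fun s hs hs' => hs'.1.not_ge hs.2) measurableSet_Ioo
        (hf t).integrableOn_Icc ((hf t).integrableOn_Icc.mono_set Ioo_subset_Icc_self),
      Icc_union_Ioo_eq_Ico hat.le htx]
  · rw [setIntegral_Icc_eq_setIntegral_Ico_add hat.le (hf t).integrableOn_Icc, hdiag, smul_zero,
      add_zero]
    simp

end ParametricIntegral

section Kernel

variable (q lam c : ℝ)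

noncomputable def gkerDeriv (k : ℕ) (s x : ℝ) : ℝ :=
  ((lam / c) ^ k / Nat.factorial k) * Real.exp (-((q + lam) / c) * (s - x)) *
    (((q + lam) / c) * (s - x) ^ k - k * (s - x) ^ (k - 1))

theorem hasDerivAt_gker (k : ℕ) (s x : ℝ) :
    HasDerivAt (gker q lam c k s) (gkerDeriv q lam c k s x) x := by
  have hsub := (hasDerivAt_id' x).const_sub s
  refine ((((hsub.const_mul (-((q + lam) / c))).exp.mul (hsub.pow k)).const_mul
    ((lam / c) ^ k / Nat.factorial k)).congr_deriv ?_).congr_of_eventuallyEq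
    (Eventually.of_forall fun u => ?_)
  · simp only [gkerDeriv, Pi.pow_apply]
    ring
  · simp only [gker, Pi.mul_apply, Pi.pow_apply]
    ring

theorem continuous_gker_left (k : ℕ) (t : ℝ) : Continuous (gker q lam c k · t) := by
  unfold gker
  fun_prop

theorem continuous_uncurry_gkerDeriv (k : ℕ) :
    Continuous (Function.uncurry (gkerDeriv q lam c k)) := by
  unfold gkerDeriv Function.uncurry
  fun_prop

theorem gker_self {k : ℕ} (hk : k ≠ 0) (x : ℝ) : gker q lam c k x x = 0 := by
  simp [gker, hk]

theorem gkerDeriv_one_self (x : ℝ) : gkerDeriv q lam c 1 x x = -(lam / c) := by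
  simp [gkerDeriv]

theorem gkerDeriv_self_of_two_le {k : ℕ} (hk : 2 ≤ k) (x : ℝ) :
    gkerDeriv q lam c k x x = 0 := by
  simp [gkerDeriv, show k ≠ 0 by omega, show k - 1 ≠ 0 by omega]

theorem hasDerivWithinAt_Ici_setIntegral_gker (ν : Measure ℝ) [IsLocallyFiniteMeasure ν]
    {k : ℕ} (hk : k ≠ 0) {x : ℝ} (hx : 0 ≤ x) :
    HasDerivWithinAt (fun t => ∫ s in Icc 0 t, gker q lam c k s t ∂ν)
      (∫ s in Icc 0 x, gkerDeriv q lam c k s x ∂ν) (Ici x) x :=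
  hasDerivWithinAt_Ici_setIntegral_Icc (continuous_gker_left q lam c k)
    (continuous_uncurry_gkerDeriv q lam c k) (hasDerivAt_gker q lam c k) (gker_self q lam c hk) hx

theorem hasDerivWithinAt_Iic_setIntegral_gker (ν : Measure ℝ) [IsLocallyFiniteMeasure ν]
    {k : ℕ} (hk : k ≠ 0) {x : ℝ} (hx : 0 < x) :
    HasDerivWithinAt (fun t => ∫ s in Icc 0 t, gker q lam c k s t ∂ν)
      (∫ s in Ico 0 x, gkerDeriv q lam c k s x ∂ν) (Iic x) x :=
  hasDerivWithinAt_Iic_setIntegral_Icc (continuous_gker_left q lam c k)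
    (continuous_uncurry_gkerDeriv q lam c k) (hasDerivAt_gker q lam c k) (gker_self q lam c hk) hx

end Kernel

instance isProbabilityMeasure_convPow (μ : Measure ℝ) [IsProbabilityMeasure μ] :
    ∀ k, IsProbabilityMeasure (convPow μ k)
  | 0 => inferInstanceAs (IsProbabilityMeasure (Measure.dirac 0))
  | k + 1 =>
    have := isProbabilityMeasure_convPow μ k
    Measure.isProbabilityMeasure_map (by fun_prop)

theorem convPow_one (μ : Measure ℝ) [SFinite μ] : convPow μ 1 = μ := by
  rw [convPow, convPow, Measure.dirac_prod, Measure.map_map (by fun_prop) measurable_prodMk_left]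
  simp [Function.comp_def]

theorem stieltjes_integral_one_sided_deriv_general (q lam c : ℝ) (hlam : 0 < lam)
    (hc : 0 < c) (μ : Measure ℝ) [IsProbabilityMeasure μ] :
    (∀ k : ℕ, 1 ≤ k → ∀ x : ℝ, 0 ≤ x →
      HasDerivWithinAt (fun t => ∫ s in Set.Icc (0 : ℝ) t, gker q lam c k s t ∂(convPow μ k))
        (∫ s in Set.Icc (0 : ℝ) x, deriv (fun u => gker q lam c k s u) x ∂(convPow μ k))
        (Set.Ici x) x) ∧
    (∀ k : ℕ, 1 ≤ k → ∀ x : ℝ, 0 < x → ¬(k = 1 ∧ μ {x} ≠ 0) →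
      HasDerivWithinAt (fun t => ∫ s in Set.Icc (0 : ℝ) t, gker q lam c k s t ∂(convPow μ k))
        (∫ s in Set.Icc (0 : ℝ) x, deriv (fun u => gker q lam c k s u) x ∂(convPow μ k))
        (Set.Iic x) x) ∧
    ∀ x : ℝ, 0 < x → μ {x} ≠ 0 →
      HasDerivWithinAt (fun t => ∫ s in Set.Icc (0 : ℝ) t, gker q lam c 1 s t ∂(convPow μ 1))
        (∫ s in Set.Ico (0 : ℝ) x, deriv (fun u => gker q lam c 1 s u) x ∂(convPow μ 1))
        (Set.Iic x) x ∧
      (∫ s in Set.Ico (0 : ℝ) x, deriv (fun u => gker q lam c 1 s u) x ∂(convPow μ 1)) ≠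
        (∫ s in Set.Icc (0 : ℝ) x, deriv (fun u => gker q lam c 1 s u) x ∂(convPow μ 1)) := by
  have hderiv (k : ℕ) (s x : ℝ) : deriv (gker q lam c k s) x = gkerDeriv q lam c k s x :=
    (hasDerivAt_gker q lam c k s x).deriv
  have hatom (k : ℕ) {x : ℝ} (hx : 0 < x) :
      ∫ s in Icc 0 x, gkerDeriv q lam c k s x ∂(convPow μ k) =
        ∫ s in Ico 0 x, gkerDeriv q lam c k s x ∂(convPow μ k) +
          (convPow μ k).real {x} * gkerDeriv q lam c k x x :=
    setIntegral_Icc_eq_setIntegral_Ico_add hx.le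
      ((continuous_uncurry_gkerDeriv q lam c k).comp (.prodMk_left x)).integrableOn_Icc
  simp only [hderiv]
  refine ⟨fun k hk x hx => hasDerivWithinAt_Ici_setIntegral_gker q lam c _ (by omega) hx,
    fun k hk x hx hnojump => ?_, fun x hx hjump => ⟨?_, ?_⟩⟩
  · have hvanish : (convPow μ k).real {x} * gkerDeriv q lam c k x x = 0 := by
      rcases hk.eq_or_lt with rfl | hk
      · simp [convPow_one, measureReal_def, not_not.1 fun h => hnojump ⟨rfl, h⟩]
      · simp [gkerDeriv_self_of_two_le q lam c hk]
    rw [hatom k hx, hvanish, add_zero]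
    exact hasDerivWithinAt_Iic_setIntegral_gker q lam c _ (by omega) hx
  · exact hasDerivWithinAt_Iic_setIntegral_gker q lam c _ one_ne_zero hx
  · rw [hatom 1 hx, gkerDeriv_one_self, convPow_one, ne_eq, left_eq_add]
    exact mul_ne_zero ((measureReal_ne_zero_iff (measure_ne_top μ _)).2 hjump)
      (neg_ne_zero.2 (div_pos hlam hc).ne')

/-- One-sided differentiability of `G_k(x) = ∫_{[0,x]} g_k(s,x) dF^{*k}(s)` where `F` is the
c.d.f. of the probability measure `μ` on `(0,∞)`: the right derivative is always
`∫_{[0,x]} ∂_x g_k(s,x) dF^{*k}(s)`; the left derivative coincides with it unless `k = 1`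
and `F` jumps at the point, in which case the left derivative is
`∫_{[0,x)} ∂_x g_1(s,x) dF(s)`, and it differs from the right derivative. -/
theorem stieltjes_integral_one_sided_deriv (q lam c : ℝ) (hq : 0 ≤ q) (hlam : 0 < lam)
    (hc : 0 < c) (μ : Measure ℝ) [IsProbabilityMeasure μ] (hsupp : μ (Set.Iio 0) = 0)
    (h0 : μ {(0 : ℝ)} = 0) :
    (∀ k : ℕ, 1 ≤ k → ∀ x : ℝ, 0 ≤ x →
      HasDerivWithinAt (fun t => ∫ s in Set.Icc (0 : ℝ) t, gker q lam c k s t ∂(convPow μ k))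
        (∫ s in Set.Icc (0 : ℝ) x, deriv (fun u => gker q lam c k s u) x ∂(convPow μ k))
        (Set.Ici x) x) ∧
    (∀ k : ℕ, 1 ≤ k → ∀ x : ℝ, 0 < x → ¬(k = 1 ∧ μ {x} ≠ 0) →
      HasDerivWithinAt (fun t => ∫ s in Set.Icc (0 : ℝ) t, gker q lam c k s t ∂(convPow μ k))
        (∫ s in Set.Icc (0 : ℝ) x, deriv (fun u => gker q lam c k s u) x ∂(convPow μ k))
        (Set.Iic x) x) ∧
    ∀ x : ℝ, 0 < x → μ {x} ≠ 0 →
      HasDerivWithinAt (fun t => ∫ s in Set.Icc (0 : ℝ) t, gker q lam c 1 s t ∂(convPow μ 1))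
        (∫ s in Set.Ico (0 : ℝ) x, deriv (fun u => gker q lam c 1 s u) x ∂(convPow μ 1))
        (Set.Iic x) x ∧
      (∫ s in Set.Ico (0 : ℝ) x, deriv (fun u => gker q lam c 1 s u) x ∂(convPow μ 1)) ≠
        (∫ s in Set.Icc (0 : ℝ) x, deriv (fun u => gker q lam c 1 s u) x ∂(convPow μ 1)) :=
  stieltjes_integral_one_sided_deriv_general q lam c hlam hc μ
end

section
/- Let F be a continuous cumulative distribution function on ℝ with F(0) = 0, and let k, n ∈ ℕ. Then for all x ≥ 0 at which the one-sided derivative ∂_± F^{*k}(x) exists, ∂_± ∫_{[0,x]} ∂_x^n g_k(s,x) dF^{*k}(s) = ∫_{[0,x]} ∂_x^{n+1} g_k(s,x) dF^{*k}(s) + C(k,n) ∂_± F^{*k}(x), where C(k,n) = (λ/c)^k (n choose k) ((q+λ)/c)^{n−k} (−1)^k for n ≥ k and C(k,n) = 0 for n < k. -/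
open MeasureTheory Filter Set

/-! Put `ν = F^{*k}` and `h(s,t) = ∂ₜⁿ g_k(s,t)`. Since `ν` lives on `[0,∞)`,
`∫_{[0,t]} h(s,t) dν = ∫_{[0,x]} h(s,t) dν + ∫_{(x,t]} h(s,t) dν` (signed for `t < x`).
The first term is differentiated under the integral sign, `∂ₜh` being continuous on compacts.
By continuity of `h` at `(x,x)` the second term is `h(x,x)(F^{*k}(t) - F^{*k}(x))` up to
`o(F^{*k}(t) - F^{*k}(x))`, and the latter is `O(t - x)` from the side where `F^{*k}` is
differentiable. Finally `h(x,x) = C(k,n)` by the Leibniz rule for `v ↦ vᵏ e^{-(q+λ)v/c}` at `0`. -/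

open MeasureTheory Filter Set Topology Metric Function Asymptotics Real
open scoped Nat

instance isFiniteMeasure_convPow (μ : Measure ℝ) [IsFiniteMeasure μ] (k : ℕ) :
    IsFiniteMeasure (convPow μ k) := by
  induction k with
  | zero => rw [convPow]; infer_instance
  | succ k ih => rw [convPow]; infer_instance

lemma measure_Iio_zero_eq_zero_iff {ν : Measure ℝ} :
    ν (Iio 0) = 0 ↔ ∀ᵐ s ∂ν, 0 ≤ s := by
  simp only [ae_iff, not_le]; rfl

lemma convPow_Iio_zero {μ : Measure ℝ} [IsFiniteMeasure μ] (hμ : μ (Iio 0) = 0) (k : ℕ) :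
    convPow μ k (Iio 0) = 0 := by
  rw [measure_Iio_zero_eq_zero_iff] at hμ ⊢
  induction k with
  | zero => simp [convPow]
  | succ k ih =>
    rw [convPow, ae_map_iff (by fun_prop) (measurableSet_le measurable_const measurable_id')]
    filter_upwards [Measure.quasiMeasurePreserving_fst.ae ih,
      Measure.quasiMeasurePreserving_snd.ae hμ] with p h₁ h₂ using add_nonneg h₁ h₂

lemma Icc_zero_ae_eq_Iic {ν : Measure ℝ} (hν : ν (Iio 0) = 0) (t : ℝ) :
    Icc 0 t =ᵐ[ν] Iic t := by
  refine ae_eq_set.2 ⟨by simp [sdiff_eq_empty.2 Icc_subset_Iic_self], measure_mono_null ?_ hν⟩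
  intro s ⟨hst, hs⟩
  by_contra h
  exact hs ⟨not_lt.1 h, hst⟩

section
variable {ν : Measure ℝ} [IsFiniteMeasure ν]

lemma setIntegral_Icc_zero_sub_setIntegral_Icc_zero (hν : ν (Iio 0) = 0) {g : ℝ → ℝ}
    (hg : Continuous g) (x t : ℝ) :
    ∫ s in Icc 0 t, g s ∂ν - ∫ s in Icc 0 x, g s ∂ν = ∫ s in x..t, g s ∂ν := by
  have hint : ∀ u, IntegrableOn g (Iic u) ν := fun u =>
    hg.integrableOn_Icc.congr_set_ae (Icc_zero_ae_eq_Iic hν u).symm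
  rw [setIntegral_congr_set (Icc_zero_ae_eq_Iic hν t),
    setIntegral_congr_set (Icc_zero_ae_eq_Iic hν x),
    intervalIntegral.integral_Iic_sub_Iic (hint x) (hint t)]

lemma measureReal_Iic_sub_measureReal_Iic (x t : ℝ) :
    ν.real (Iic t) - ν.real (Iic x) = ∫ _ in x..t, (1 : ℝ) ∂ν := by
  rw [← intervalIntegral.integral_Iic_sub_Iic (integrableOn_const (measure_ne_top _ _))
    (integrableOn_const (measure_ne_top _ _))]
  simp

lemma isLittleO_intervalIntegral_sub_mul_measureReal_Iic_sub {f : ℝ → ℝ → ℝ}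
    (hf : Continuous (uncurry f)) (x : ℝ) :
    (fun t => ∫ s in x..t, f s t ∂ν - f x x * (ν.real (Iic t) - ν.real (Iic x)))
      =o[𝓝 x] fun t => ν.real (Iic t) - ν.real (Iic x) := by
  refine IsLittleO.of_bound fun ε hε => ?_
  obtain ⟨δ, hδ, hclose⟩ := Metric.eventually_nhds_iff.1
    ((hf.tendsto (x, x)).eventually (closedBall_mem_nhds _ hε))
  filter_upwards [ball_mem_nhds x hδ] with t ht
  have hfint : IntervalIntegrable (fun s => f s t) ν x t :=
    (hf.uncurry_right t).intervalIntegrable x t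
  rw [measureReal_Iic_sub_measureReal_Iic (ν := ν), ← intervalIntegral.integral_const_mul,
    ← intervalIntegral.integral_sub hfint (intervalIntegrable_const (μ := ν)),
    intervalIntegral.norm_integral_eq_norm_integral_uIoc,
    intervalIntegral.norm_integral_eq_norm_integral_uIoc]
  simp only [mul_one, setIntegral_const, smul_eq_mul, Real.norm_of_nonneg measureReal_nonneg]
  refine norm_setIntegral_le_of_norm_le_const (measure_lt_top ν _) fun s hs => ?_
  have hts : dist (s, t) (x, x) < δ := by
    rw [Prod.dist_eq, max_lt_iff, Real.dist_eq]
    exact ⟨(abs_sub_left_of_mem_uIcc (uIoc_subset_uIcc hs)).trans_lt ht, ht⟩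
  simpa [dist_eq_norm] using hclose hts

lemma hasDerivWithinAt_intervalIntegral_self {f : ℝ → ℝ → ℝ} (hf : Continuous (uncurry f))
    {S : Set ℝ} {x d : ℝ} (hF : HasDerivWithinAt (fun t => ν.real (Iic t)) d S x) :
    HasDerivWithinAt (fun t => ∫ s in x..t, f s t ∂ν) (f x x * d) S x := by
  have hmain := ((isLittleO_intervalIntegral_sub_mul_measureReal_Iic_sub hf x).mono
    nhdsWithin_le_nhds).trans_isBigO hF.hasFDerivWithinAt.isBigO_sub
  rw [hasDerivWithinAt_iff_isLittleO] at hF ⊢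
  refine (hmain.add (hF.const_mul_left (f x x))).congr_left fun t => ?_
  simp only [intervalIntegral.integral_same, smul_eq_mul]
  ring

lemma hasDerivAt_setIntegral_Icc {f f' : ℝ → ℝ → ℝ} (hf : Continuous (uncurry f))
    (hf' : Continuous (uncurry f')) (hderiv : ∀ s t, HasDerivAt (f s) (f' s t) t) (a b x : ℝ) :
    HasDerivAt (fun t => ∫ s in Icc a b, f s t ∂ν) (∫ s in Icc a b, f' s x ∂ν) x := by
  obtain ⟨M, hM⟩ := (isCompact_Icc.prod (isCompact_closedBall x 1)).exists_bound_of_continuousOn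
    hf'.continuousOn
  refine (hasDerivAt_integral_of_dominated_loc_of_deriv_le (bound := fun _ => M)
    (closedBall_mem_nhds x one_pos)
    (Eventually.of_forall fun t => (hf.uncurry_right t).aestronglyMeasurable)
    (hf.uncurry_right x).integrableOn_Icc (hf'.uncurry_right x).aestronglyMeasurable ?_
    (integrable_const M) (ae_of_all _ fun s t _ => hderiv s t)).2
  filter_upwards [ae_restrict_mem measurableSet_Icc] with s hs t ht using hM (s, t) ⟨hs, ht⟩

theorem hasDerivWithinAt_setIntegral_Icc_zero (hν : ν (Iio 0) = 0) {f f' : ℝ → ℝ → ℝ}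
    (hf : Continuous (uncurry f)) (hf' : Continuous (uncurry f'))
    (hderiv : ∀ s t, HasDerivAt (f s) (f' s t) t) {S : Set ℝ} {x d : ℝ}
    (hF : HasDerivWithinAt (fun t => ν.real (Iic t)) d S x) :
    HasDerivWithinAt (fun t => ∫ s in Icc 0 t, f s t ∂ν)
      ((∫ s in Icc 0 x, f' s x ∂ν) + f x x * d) S x := by
  have hsplit : (fun t => ∫ s in Icc 0 t, f s t ∂ν)
      = fun t => (∫ s in Icc 0 x, f s t ∂ν) + ∫ s in x..t, f s t ∂ν := by
    ext t
    rw [← setIntegral_Icc_zero_sub_setIntegral_Icc_zero hν (hf.uncurry_right t), add_sub_cancel]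
  rw [hsplit]
  exact (hasDerivAt_setIntegral_Icc hf hf' hderiv 0 x x).hasDerivWithinAt.add
    (hasDerivWithinAt_intervalIntegral_self hf hF)

end

lemma iteratedDeriv_pow_mul_exp_zero (k n : ℕ) (b : ℝ) :
    iteratedDeriv n (fun v => v ^ k * exp (b * v)) 0
      = if k ≤ n then n.choose k * k ! * b ^ (n - k) else 0 := by
  rw [iteratedDeriv_fun_mul (by fun_prop) (by fun_prop)]
  simp only [iteratedDeriv_fun_pow_zero, iteratedDeriv_exp_const_mul, mul_zero, exp_zero, mul_one]
  simp [Finset.sum_ite_eq']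

lemma iteratedDeriv_gker (q lam c : ℝ) (k n : ℕ) (s t : ℝ) :
    iteratedDeriv n (gker q lam c k s) t = (-1) ^ n * ((lam / c) ^ k / k !) *
      iteratedDeriv n (fun v => v ^ k * exp (-((q + lam) / c) * v)) (s - t) := by
  set p : ℝ → ℝ := fun v => v ^ k * exp (-((q + lam) / c) * v)
  have hker : gker q lam c k s = fun u => (lam / c) ^ k / k ! * p (s - u) := by
    ext u; simp only [gker, p]; ring
  rw [hker, iteratedDeriv_const_mul_field, iteratedDeriv_comp_const_sub n p s]
  simp only [smul_eq_mul]
  ring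

lemma contDiff_gker (q lam c : ℝ) (k : ℕ) (s : ℝ) : ContDiff ℝ ⊤ (gker q lam c k s) := by
  unfold gker; fun_prop

lemma hasDerivAt_iteratedDeriv_gker (q lam c : ℝ) (k n : ℕ) (s t : ℝ) :
    HasDerivAt (iteratedDeriv n (gker q lam c k s))
      (iteratedDeriv (n + 1) (gker q lam c k s) t) t := by
  rw [iteratedDeriv_succ]
  exact ((contDiff_gker q lam c k s).differentiable_iteratedDeriv n (by simp) t).hasDerivAt

lemma continuous_uncurry_iteratedDeriv_gker (q lam c : ℝ) (k n : ℕ) :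
    Continuous (uncurry fun s t => iteratedDeriv n (gker q lam c k s) t) := by
  simp only [iteratedDeriv_gker]
  exact continuous_const.mul (((by fun_prop : ContDiff ℝ ⊤ fun v : ℝ =>
    v ^ k * exp (-((q + lam) / c) * v)).continuous_iteratedDeriv n (by simp)).comp
      (continuous_fst.sub continuous_snd))

lemma iteratedDeriv_gker_self (q lam c : ℝ) (k n : ℕ) (x : ℝ) :
    iteratedDeriv n (gker q lam c k x) x = if k ≤ n then
      (lam / c) ^ k * (n.choose k : ℝ) * ((q + lam) / c) ^ (n - k) * (-1 : ℝ) ^ k else 0 := by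
  rw [iteratedDeriv_gker, sub_self, iteratedDeriv_pow_mul_exp_zero]
  split_ifs with hkn
  · obtain ⟨m, rfl⟩ := Nat.exists_eq_add_of_le hkn
    have hsq : ((-1 : ℝ) ^ m) * (-1) ^ m = 1 := by rw [← mul_pow]; simp
    have hfac : (k ! : ℝ) ≠ 0 := by positivity
    rw [Nat.add_sub_cancel_left, neg_pow ((q + lam) / c), pow_add]
    generalize (lam / c) ^ k = A, (q + lam) / c = a
    field_simp
    linear_combination (A * ((k + m).choose k) * a ^ m) * hsq
  · simp

theorem stieltjes_integral_higher_deriv_general (q lam c : ℝ) (μ : Measure ℝ) [IsProbabilityMeasure μ]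
    (hsupp : μ (Set.Iio 0) = 0) (k n : ℕ) (x : ℝ) (d : ℝ) (S : Set ℝ)
    (hF : HasDerivWithinAt (fun t => ((convPow μ k) (Set.Iic t)).toReal) d S x) :
    HasDerivWithinAt
      (fun t => ∫ s in Set.Icc (0 : ℝ) t,
        iteratedDeriv n (fun u => gker q lam c k s u) t ∂(convPow μ k))
      ((∫ s in Set.Icc (0 : ℝ) x,
          iteratedDeriv (n + 1) (fun u => gker q lam c k s u) x ∂(convPow μ k)) +
        (if k ≤ n then
            (lam / c) ^ k * (n.choose k : ℝ) * ((q + lam) / c) ^ (n - k) * (-1 : ℝ) ^ k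
          else 0) * d)
      S x := by
  rw [← iteratedDeriv_gker_self q lam c k n x]
  exact hasDerivWithinAt_setIntegral_Icc_zero (convPow_Iio_zero hsupp k)
    (continuous_uncurry_iteratedDeriv_gker q lam c k n)
    (continuous_uncurry_iteratedDeriv_gker q lam c k (n + 1))
    (hasDerivAt_iteratedDeriv_gker q lam c k n) hF

/-- Differentiating `x ↦ ∫_{[0,x]} ∂_x^n g_k(s,x) dF^{*k}(s)` for a continuous c.d.f. `F`
(i.e. an atomless probability measure `μ` on `(0,∞)`): wherever the one-sided derivative `d`
of `F^{*k}` exists, the one-sided derivative of the integral is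
`∫_{[0,x]} ∂_x^{n+1} g_k(s,x) dF^{*k}(s) + C(k,n) d`, with
`C(k,n) = (λ/c)^k (n choose k)((q+λ)/c)^{n-k}(-1)^k` for `n ≥ k` and `0` otherwise. -/
theorem stieltjes_integral_higher_deriv (q lam c : ℝ) (hq : 0 ≤ q) (hlam : 0 < lam)
    (hc : 0 < c) (μ : Measure ℝ) [IsProbabilityMeasure μ] (hsupp : μ (Set.Iio 0) = 0)
    (hcont : ∀ x : ℝ, μ {x} = 0) (k n : ℕ) (x : ℝ) (hx : 0 ≤ x) (d : ℝ) (S : Set ℝ)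
    (hS : S = Set.Ici x ∨ S = Set.Iic x)
    (hF : HasDerivWithinAt (fun t => ((convPow μ k) (Set.Iic t)).toReal) d S x) :
    HasDerivWithinAt
      (fun t => ∫ s in Set.Icc (0 : ℝ) t,
        iteratedDeriv n (fun u => gker q lam c k s u) t ∂(convPow μ k))
      ((∫ s in Set.Icc (0 : ℝ) x,
          iteratedDeriv (n + 1) (fun u => gker q lam c k s u) x ∂(convPow μ k)) +
        (if k ≤ n then
            (lam / c) ^ k * (n.choose k : ℝ) * ((q + lam) / c) ^ (n - k) * (-1 : ℝ) ^ k
          else 0) * d)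
      S x :=
  stieltjes_integral_higher_deriv_general q lam c μ hsupp k n x d S hF
end

section
/- Let L_t = ct − N_t with c > 0 and N a Poisson process with intensity λ > 0 (i.e., the jump distribution is Π = δ_1). Then the 0-scale function of L is W^{(0)}(x) = (1/c) Σ_{s=0}^{⌊x⌋} (e^{−(λ/c)(s−x)} / s!) (λ/c)^s (s−x)^s for all x ≥ 0. -/
open MeasureTheory Filter Set

/-!
Write `r = λ / c`. Both `W` and the Erlang sum are continuous on `[0, ∞)` and have Laplace
transform `1 / ψ(β)` for large `β`. For the Erlang sum this is a geometric series: its `s`-th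
term, switched on at `x = s`, is a shifted Gamma density with transform
`e^{-βs} (-r)^s / (β - r)^{s+1}`. Laplace transforms determine a function almost everywhere:
under `t = e^{-x}` the exponentials `e^{-nx}` become the monomials `t^n`, and by Weierstrass a
function on `(0, 1)` orthogonal to all polynomials vanishes almost everywhere. Continuity turns
the almost-everywhere equality into equality on `[0, ∞)`.
-/

open Real Polynomial

section Moments

variable {μ : Measure ℝ} {s : Set ℝ} {G : ℝ → ℝ}

theorem integral_mul_eq_zero_of_forall_integral_pow_mul_eq_zero (hs : MeasurableSet s)
    (hsb : Bornology.IsBounded s) (hG : IntegrableOn G s μ)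
    (hmom : ∀ n : ℕ, ∫ x in s, x ^ n * G x ∂μ = 0) {h : ℝ → ℝ} (hh : Continuous h) :
    ∫ x in s, h x * G x ∂μ = 0 := by
  obtain ⟨a, b, hab⟩ : ∃ a b, s ⊆ Icc a b := ⟨_, _, hsb.subset_Icc_sInf_sSup⟩
  have hint : ∀ φ : ℝ → ℝ, Continuous φ → IntegrableOn (fun x => φ x * G x) s μ :=
    fun φ hφ => hG.continuousOn_mul_of_subset hφ.continuousOn isCompact_Icc hs hab
  have hpoly : ∀ p : ℝ[X], ∫ x in s, p.eval x * G x ∂μ = 0 := by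
    intro p
    induction p using Polynomial.induction_on' with
    | add p q hp hq =>
      simp only [eval_add, add_mul]
      rw [integral_add (hint _ p.continuous) (hint _ q.continuous), hp, hq, add_zero]
    | monomial n c =>
      simp only [eval_monomial, mul_assoc]
      rw [integral_const_mul, hmom, mul_zero]
  set C := ∫ x in s, ‖G x‖ ∂μ
  have hC : 0 ≤ C := integral_nonneg fun _ => norm_nonneg _
  refine abs_nonpos_iff.mp (le_of_forall_pos_le_add fun ε hε => ?_)
  obtain ⟨p, hp⟩ :=
    exists_polynomial_near_of_continuousOn a b h hh.continuousOn (ε / (C + 1)) (by positivity)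
  calc |∫ x in s, h x * G x ∂μ| = ‖∫ x in s, (h x - p.eval x) * G x ∂μ‖ := by
        simp only [sub_mul]
        rw [integral_sub (hint _ hh) (hint _ p.continuous), hpoly, sub_zero, Real.norm_eq_abs]
    _ ≤ ∫ x in s, ε / (C + 1) * ‖G x‖ ∂μ := by
        refine norm_integral_le_of_norm_le (hG.norm.const_mul _) ?_
        filter_upwards [ae_restrict_mem hs] with x hx
        rw [norm_mul, Real.norm_eq_abs, abs_sub_comm]
        exact mul_le_mul_of_nonneg_right (hp x (hab hx)).le (norm_nonneg _)
    _ = ε / (C + 1) * C := integral_const_mul _ _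
    _ ≤ 0 + ε := by
        rw [zero_add, div_mul_eq_mul_div, div_le_iff₀ (by positivity)]
        nlinarith

theorem ae_eq_zero_of_forall_integral_pow_mul_eq_zero (hs : MeasurableSet s)
    (hsb : Bornology.IsBounded s) (hG : IntegrableOn G s μ)
    (hmom : ∀ n : ℕ, ∫ x in s, x ^ n * G x ∂μ = 0) : ∀ᵐ x ∂μ.restrict s, G x = 0 :=
  ae_eq_zero_of_integral_contDiff_smul_eq_zero hG.locallyIntegrable fun _ hg _ => by
    simpa only [smul_eq_mul] using
      integral_mul_eq_zero_of_forall_integral_pow_mul_eq_zero hs hsb hG hmom hg.continuous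

end Moments

theorem image_exp_neg_Ioi_zero : (fun x => exp (-x)) '' Ioi 0 = Ioo 0 1 := by
  rw [show (fun x => exp (-x)) = exp ∘ Neg.neg from rfl, image_comp, image_neg_Ioi, neg_zero,
    image_exp_Iio, exp_zero]

theorem integral_Ioo_zero_one_eq_integral_exp_neg (g : ℝ → ℝ) :
    ∫ t in Ioo 0 1, g t = ∫ x in Ioi 0, exp (-x) * g (exp (-x)) := by
  rw [← image_exp_neg_Ioi_zero, integral_image_eq_integral_abs_deriv_smul measurableSet_Ioi
    (fun x _ => (hasDerivAt_neg x).exp.hasDerivWithinAt) (exp_injective.comp neg_injective).injOn]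
  simp [abs_of_pos (exp_pos _)]

theorem integrableOn_Ioo_zero_one_iff (g : ℝ → ℝ) :
    IntegrableOn g (Ioo 0 1) ↔ IntegrableOn (fun x => exp (-x) * g (exp (-x))) (Ioi 0) := by
  rw [← image_exp_neg_Ioi_zero, integrableOn_image_iff_integrableOn_abs_deriv_smul
    measurableSet_Ioi (fun x _ => (hasDerivAt_neg x).exp.hasDerivWithinAt)
    (exp_injective.comp neg_injective).injOn]
  simp [abs_of_pos (exp_pos _)]

theorem ae_eq_zero_of_forall_integral_exp_neg_nat_mul_eq_zero {g : ℝ → ℝ}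
    (hg : IntegrableOn g (Ioi 0)) (h : ∀ n : ℕ, ∫ x in Ioi 0, exp (-(n * x)) * g x = 0) :
    ∀ᵐ x ∂volume.restrict (Ioi 0), g x = 0 := by
  set G : ℝ → ℝ := fun t => g (-log t) / t
  have hG : ∀ x, exp (-x) * G (exp (-x)) = g x := fun x => by
    simp only [G, log_exp, neg_neg, mul_div_cancel₀ _ (exp_pos _).ne']
  have hGint : IntegrableOn G (Ioo 0 1) := by
    rw [integrableOn_Ioo_zero_one_iff]
    simpa only [hG] using hg
  have hGzero : ∀ᵐ t ∂volume.restrict (Ioo 0 1), G t = 0 := by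
    refine ae_eq_zero_of_forall_integral_pow_mul_eq_zero measurableSet_Ioo
      (Metric.isBounded_Ioo 0 1) hGint fun n => ?_
    rw [integral_Ioo_zero_one_eq_integral_exp_neg]
    refine (setIntegral_congr_fun measurableSet_Ioi fun x _ => ?_).trans (h n)
    rw [← hG x, ← exp_nat_mul, mul_neg]
    ring
  have hnorm : ∫ x in Ioi 0, ‖g x‖ = 0 :=
    calc ∫ x in Ioi 0, ‖g x‖ = ∫ t in Ioo 0 1, ‖G t‖ := by
          rw [integral_Ioo_zero_one_eq_integral_exp_neg]
          refine setIntegral_congr_fun measurableSet_Ioi fun x _ => ?_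
          rw [← hG x, norm_mul, norm_of_nonneg (exp_pos _).le]
      _ = 0 := integral_eq_zero_of_ae (by filter_upwards [hGzero] with t ht; simp [ht])
  filter_upwards [(integral_eq_zero_iff_of_nonneg (fun _ => norm_nonneg _) hg.norm).1 hnorm]
    with x hx
  simpa using hx

theorem ae_eq_of_forall_laplace_eq {f g : ℝ → ℝ} {B : ℝ}
    (hf : ∀ β, B < β → IntegrableOn (fun x => exp (-β * x) * f x) (Ioi 0))
    (hg : ∀ β, B < β → IntegrableOn (fun x => exp (-β * x) * g x) (Ioi 0))
    (hfg : ∀ β, B < β →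
      ∫ x in Ioi 0, exp (-β * x) * f x = ∫ x in Ioi 0, exp (-β * x) * g x) :
    f =ᵐ[volume.restrict (Ioi 0)] g := by
  have hB : ∀ n : ℕ, B < B + 1 + n := fun n => by linarith [n.cast_nonneg (α := ℝ)]
  have hshift : ∀ (n : ℕ) (x : ℝ), exp (-(n * x)) * (exp (-(B + 1) * x) * (f x - g x)) =
      exp (-(B + 1 + n) * x) * f x - exp (-(B + 1 + n) * x) * g x := fun n x => by
    simp only [mul_sub, ← mul_assoc, ← exp_add]
    ring_nf
  have hzero := ae_eq_zero_of_forall_integral_exp_neg_nat_mul_eq_zero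
    (g := fun x => exp (-(B + 1) * x) * (f x - g x))
    (by simp only [mul_sub]; exact (hf _ (lt_add_one B)).sub (hg _ (lt_add_one B)))
    fun n => by
      simp only [hshift]
      rw [integral_sub (hf _ (hB n)) (hg _ (hB n)), hfg _ (hB n), sub_self]
  filter_upwards [hzero] with x hx
  simpa [sub_eq_zero, (exp_pos _).ne'] using hx

noncomputable def erlangTerm (r : ℝ) (s : ℕ) (x : ℝ) : ℝ :=
  exp (-r * ((s : ℝ) - x)) / (Nat.factorial s : ℝ) * r ^ s * ((s : ℝ) - x) ^ s

noncomputable def erlangSum (r x : ℝ) : ℝ :=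
  ∑ s ∈ Finset.range (⌊x⌋₊ + 1), erlangTerm r s x

section FloorSum

variable {M : Type*} [AddCommMonoid M] {x : ℝ}

theorem natCast_le_iff_mem_range_floor_add_one (hx : 0 ≤ x) {s : ℕ} :
    (s : ℝ) ≤ x ↔ s ∈ Finset.range (⌊x⌋₊ + 1) := by
  rw [Finset.mem_range, Nat.lt_succ_iff, Nat.le_floor_iff hx]

theorem sum_range_floor_add_one_eq_sum_indicator (F : ℕ → ℝ → M) (hx : 0 ≤ x) {N : ℕ}
    (hxN : x < N) :
    ∑ s ∈ Finset.range (⌊x⌋₊ + 1), F s x =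
      ∑ s ∈ Finset.range N, (Ici (s : ℝ)).indicator (F s) x := by
  have hsub : Finset.range (⌊x⌋₊ + 1) ⊆ Finset.range N :=
    Finset.range_subset_range.2 ((Nat.floor_lt hx).2 hxN)
  rw [← Finset.sum_subset hsub (f := fun s : ℕ => (Ici (s : ℝ)).indicator (F s) x)
    fun s _ hs => indicator_of_notMem (mt (natCast_le_iff_mem_range_floor_add_one hx).1 hs) _]
  exact Finset.sum_congr rfl fun s hs =>
    (indicator_of_mem ((natCast_le_iff_mem_range_floor_add_one hx).2 hs) _).symm

theorem sum_range_floor_add_one_eq_tsum_indicator [TopologicalSpace M] (F : ℕ → ℝ → M)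
    (hx : 0 ≤ x) :
    ∑ s ∈ Finset.range (⌊x⌋₊ + 1), F s x = ∑' s : ℕ, (Ici (s : ℝ)).indicator (F s) x := by
  rw [sum_range_floor_add_one_eq_sum_indicator F hx (N := ⌊x⌋₊ + 1) (by
    exact_mod_cast Nat.lt_floor_add_one x), tsum_eq_sum]
  exact fun s hs => indicator_of_notMem (mt (natCast_le_iff_mem_range_floor_add_one hx).1 hs) _

end FloorSum

theorem continuousOn_indicator_erlangTerm (r : ℝ) (s : ℕ) :
    ContinuousOn ((Ici (s : ℝ)).indicator (erlangTerm r s)) (Ici 0) := by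
  have hcont : Continuous (erlangTerm r s) := by unfold erlangTerm; fun_prop
  rcases s with _ | s
  · exact hcont.continuousOn.congr fun x hx => indicator_of_mem (by simpa using hx) _
  · -- `erlangTerm r (s + 1)` vanishes at `s + 1`, where the indicator switches it on
    rw [← piecewise_eq_indicator]
    refine (Continuous.piecewise (fun x hx => ?_) hcont continuous_const).continuousOn
    rw [frontier_Ici, mem_singleton_iff] at hx
    change _ = (0 : ℝ)
    simp [erlangTerm, hx]

theorem continuousOn_erlangSum (r : ℝ) : ContinuousOn (erlangSum r) (Ici 0) := by
  intro x hx
  have hxN : x < ((⌊x⌋₊ + 1 : ℕ) : ℝ) := by exact_mod_cast Nat.lt_floor_add_one x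
  have hF : ContinuousOn (fun y => ∑ s ∈ Finset.range (⌊x⌋₊ + 1),
      (Ici (s : ℝ)).indicator (erlangTerm r s) y) (Ici 0) :=
    continuousOn_finsetSum _ fun s _ => continuousOn_indicator_erlangTerm r s
  refine (hF x hx).congr_of_eventuallyEq ?_
    (sum_range_floor_add_one_eq_sum_indicator _ hx hxN)
  filter_upwards [self_mem_nhdsWithin, nhdsWithin_le_nhds (Iio_mem_nhds hxN)] with y hy hyN
  exact sum_range_floor_add_one_eq_sum_indicator _ hy hyN

section ShiftedIndicator

variable {E : Type*} [NormedAddCommGroup E] {ν : ℝ}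

theorem restrict_Ioi_inter_Ici {μ : Measure ℝ} [NullSingletonClass μ] {a : ℝ}
    (haν : a ≤ ν) :
    μ.restrict (Ioi a ∩ Ici ν) = μ.restrict (Ioi ν) := by
  rw [Measure.restrict_congr_set ((ae_eq_refl (Ioi a)).inter Ioi_ae_eq_Ici.symm), Ioi_inter_Ioi,
    sup_eq_right.2 haν]

theorem setIntegral_Ioi_zero_indicator_Ici [NormedSpace ℝ E] (hν : 0 ≤ ν) (g : ℝ → E) :
    ∫ x in Ioi 0, (Ici ν).indicator g x = ∫ y in Ioi 0, g (y + ν) := by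
  rw [setIntegral_indicator measurableSet_Ici, restrict_Ioi_inter_Ici hν,
    ← (measurePreserving_add_right volume ν).setIntegral_preimage_emb
      (measurableEmbedding_addRight ν), preimage_add_const_Ioi, sub_self]

theorem integrableOn_Ioi_zero_indicator_Ici_iff (hν : 0 ≤ ν) (g : ℝ → E) :
    IntegrableOn ((Ici ν).indicator g) (Ioi 0) ↔ IntegrableOn (fun y => g (y + ν)) (Ioi 0) := by
  rw [IntegrableOn, integrable_indicator_iff measurableSet_Ici, IntegrableOn,
    Measure.restrict_restrict measurableSet_Ici, inter_comm, restrict_Ioi_inter_Ici hν,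
    ← IntegrableOn, ← (measurePreserving_add_right volume ν).integrableOn_comp_preimage
      (measurableEmbedding_addRight ν), preimage_add_const_Ioi, sub_self]
  rfl

end ShiftedIndicator

theorem integral_exp_neg_mul_mul_pow {a : ℝ} (ha : 0 < a) (n : ℕ) :
    ∫ y in Ioi 0, exp (-(a * y)) * y ^ n = n.factorial / a ^ (n + 1) := by
  have h := integral_rpow_mul_exp_neg_mul_Ioi (a := n + 1) (by positivity) ha
  rw [Gamma_nat_eq_factorial, add_sub_cancel_right, ← Nat.cast_add_one, rpow_natCast] at h
  simp only [rpow_natCast] at h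
  simp only [mul_comm (exp _)]
  rw [h, one_div_pow, one_div_mul_eq_div]

theorem integrableOn_exp_neg_mul_mul_pow {a : ℝ} (ha : 0 < a) (n : ℕ) :
    IntegrableOn (fun y => exp (-(a * y)) * y ^ n) (Ioi 0) :=
  .of_integral_ne_zero <| by rw [integral_exp_neg_mul_mul_pow ha]; positivity

theorem hasSum_exp_neg_mul_pow_div_pow_succ {β q d : ℝ} (hd : 0 < d) (hq : |q| * exp (-β) < d) :
    HasSum (fun s : ℕ => exp (-β * s) * q ^ s / d ^ (s + 1)) (1 / (d - q * exp (-β))) := by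
  have hρ : |q * exp (-β) / d| < 1 := by
    rwa [abs_div, abs_mul, abs_of_pos (exp_pos _), abs_of_pos hd, div_lt_one hd]
  have hne : d - q * exp (-β) ≠ 0 :=
    (sub_pos.2 ((mul_le_mul_of_nonneg_right (le_abs_self q) (exp_pos _).le).trans_lt hq)).ne'
  have hterm : (fun s : ℕ => exp (-β * s) * q ^ s / d ^ (s + 1)) =
      fun s => (q * exp (-β) / d) ^ s * d⁻¹ := by
    ext s
    rw [mul_comm (-β), exp_nat_mul, div_pow, mul_pow, pow_succ]
    field_simp
  rw [hterm, show 1 / (d - q * exp (-β)) = (1 - q * exp (-β) / d)⁻¹ * d⁻¹ by field_simp]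
  exact (hasSum_geometric_of_abs_lt_one hρ).mul_right d⁻¹

section ErlangLaplace

variable {r β : ℝ}

theorem exp_mul_erlangTerm_add_natCast (s : ℕ) (y : ℝ) :
    exp (-β * (y + s)) * erlangTerm r s (y + s) =
      exp (-β * s) * (-r) ^ s / (s.factorial : ℝ) * (exp (-((β - r) * y)) * y ^ s) := by
  have hexp : exp (-β * (y + s)) * exp (-r * -y) = exp (-β * s) * exp (-((β - r) * y)) := by
    rw [← exp_add, ← exp_add]
    ring_nf
  rw [erlangTerm, show (s : ℝ) - (y + s) = -y by ring, neg_pow y, neg_pow r]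
  linear_combination ((-1) ^ s * r ^ s * y ^ s / (s.factorial : ℝ)) * hexp

theorem integrableOn_indicator_exp_mul_erlangTerm (hβ : r < β) (s : ℕ) :
    IntegrableOn ((Ici (s : ℝ)).indicator fun x => exp (-β * x) * erlangTerm r s x) (Ioi 0) := by
  rw [integrableOn_Ioi_zero_indicator_Ici_iff (Nat.cast_nonneg s)]
  simp only [exp_mul_erlangTerm_add_natCast]
  exact (integrableOn_exp_neg_mul_mul_pow (sub_pos.2 hβ) s).const_mul _

theorem integral_indicator_exp_mul_erlangTerm (hβ : r < β) (s : ℕ) :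
    ∫ x in Ioi 0, (Ici (s : ℝ)).indicator (fun x => exp (-β * x) * erlangTerm r s x) x =
      exp (-β * s) * (-r) ^ s / (β - r) ^ (s + 1) := by
  rw [setIntegral_Ioi_zero_indicator_Ici (Nat.cast_nonneg s)]
  simp only [exp_mul_erlangTerm_add_natCast]
  rw [integral_const_mul, integral_exp_neg_mul_mul_pow (sub_pos.2 hβ)]
  field_simp

theorem integral_norm_indicator_exp_mul_erlangTerm (hr : 0 ≤ r) (hβ : r < β) (s : ℕ) :
    ∫ x in Ioi 0, ‖(Ici (s : ℝ)).indicator (fun x => exp (-β * x) * erlangTerm r s x) x‖ =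
      exp (-β * s) * r ^ s / (β - r) ^ (s + 1) := by
  simp only [norm_indicator_eq_indicator_norm]
  rw [setIntegral_Ioi_zero_indicator_Ici (Nat.cast_nonneg s),
    setIntegral_congr_fun measurableSet_Ioi fun y (hy : 0 < y) => by
      rw [exp_mul_erlangTerm_add_natCast, norm_mul, norm_div, norm_mul, norm_pow, norm_neg,
        norm_of_nonneg hr, norm_of_nonneg (exp_pos _).le, RCLike.norm_natCast,
        norm_of_nonneg (by positivity : 0 ≤ exp (-((β - r) * y)) * y ^ s)],
    integral_const_mul, integral_exp_neg_mul_mul_pow (sub_pos.2 hβ)]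
  field_simp

theorem integral_exp_neg_mul_erlangSum (hr : 0 ≤ r) (hβ : 2 * r < β) :
    ∫ x in Ioi 0, exp (-β * x) * erlangSum r x = 1 / (β - r + r * exp (-β)) := by
  have hβr : r < β := by linarith
  have hd : 0 < β - r := by linarith
  have hq : |r| * exp (-β) < β - r := by
    rw [abs_of_nonneg hr]
    nlinarith [exp_le_one_iff.2 (by linarith : -β ≤ 0)]
  have hsum := hasSum_integral_of_summable_integral_norm
    (integrableOn_indicator_exp_mul_erlangTerm hβr)
    (by simpa only [integral_norm_indicator_exp_mul_erlangTerm hr hβr] using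
      (hasSum_exp_neg_mul_pow_div_pow_succ hd hq).summable)
  simp only [integral_indicator_exp_mul_erlangTerm hβr] at hsum
  rw [setIntegral_congr_fun measurableSet_Ioi fun x (hx : 0 < x) => by
    rw [erlangSum, Finset.mul_sum, sum_range_floor_add_one_eq_tsum_indicator
      (fun s x => exp (-β * x) * erlangTerm r s x) hx.le]]
  rw [hsum.unique (hasSum_exp_neg_mul_pow_div_pow_succ hd (by rwa [abs_neg])), neg_mul,
    sub_neg_eq_add]

end ErlangLaplace

noncomputable def poissonLaplaceExponent (c lam u : ℝ) : ℝ :=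
  c * u + lam * (exp (-u) - 1)

section PoissonLaplaceExponent

variable {c lam β : ℝ}

theorem poissonLaplaceExponent_eq (hc : c ≠ 0) :
    poissonLaplaceExponent c lam β = c * (β - lam / c + lam / c * exp (-β)) := by
  rw [poissonLaplaceExponent]
  field_simp
  ring

theorem poissonLaplaceExponent_pos (hc : 0 < c) (hlam : 0 ≤ lam) (hβ : lam / c < β) :
    0 < poissonLaplaceExponent c lam β := by
  rw [poissonLaplaceExponent_eq hc.ne']
  exact mul_pos hc (by nlinarith [mul_nonneg (div_nonneg hlam hc.le) (exp_pos (-β)).le])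

theorem sSup_poissonLaplaceExponent_eq_zero_le (hc : 0 < c) (hlam : 0 ≤ lam) :
    sSup {y | poissonLaplaceExponent c lam y = 0} ≤ lam / c :=
  Real.sSup_le (fun _ hy => not_lt.1 fun hlt => (poissonLaplaceExponent_pos hc hlam hlt).ne' hy)
    (div_nonneg hlam hc.le)

theorem integral_exp_neg_mul_one_div_mul_erlangSum (hc : 0 < c) (hlam : 0 ≤ lam)
    (hβ : 2 * (lam / c) < β) :
    ∫ x in Ioi 0, exp (-β * x) * (1 / c * erlangSum (lam / c) x) =
      1 / poissonLaplaceExponent c lam β := by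
  simp only [mul_left_comm _ (1 / c)]
  rw [integral_const_mul, integral_exp_neg_mul_erlangSum (div_nonneg hlam hc.le) hβ,
    poissonLaplaceExponent_eq hc.ne', one_div_mul_one_div]

end PoissonLaplaceExponent

/-- Erlang's formula: the `0`-scale function of `L_t = ct - N_t` (Poisson process `N` with
intensity `lam`, i.e. jump distribution `δ₁`) is
`W⁰(x) = (1/c) ∑_{s=0}^{⌊x⌋} (e^{-(λ/c)(s-x)}/s!) (λ/c)^s (s-x)^s`. -/
theorem erlang_scale_function (c lam : ℝ) (hc : 0 < c) (hlam : 0 < lam)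
    (W : ℝ → ℝ)
    (hW : IsScaleFunction (fun u => c * u + lam * (Real.exp (-u) - 1)) 0 W) :
    ∀ x : ℝ, 0 ≤ x →
      W x = (1 / c) * ∑ s ∈ Finset.range ((⌊x⌋).toNat + 1),
        Real.exp (-(lam / c) * ((s : ℝ) - x)) / (Nat.factorial s : ℝ) *
          (lam / c) ^ s * ((s : ℝ) - x) ^ s := by
  obtain ⟨hWcont, -, hWlap⟩ := hW
  have hr : 0 < lam / c := div_pos hlam hc
  have hψ : ∀ β, 2 * (lam / c) < β → 1 / poissonLaplaceExponent c lam β ≠ 0 := fun β hβ =>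
    (one_div_pos.2 (poissonLaplaceExponent_pos hc hlam.le (by linarith))).ne'
  have hWβ : ∀ β, 2 * (lam / c) < β →
      ∫ x in Ioi 0, exp (-β * x) * W x = 1 / poissonLaplaceExponent c lam β := fun β hβ => by
    rw [hWlap β ((sSup_poissonLaplaceExponent_eq_zero_le hc hlam.le).trans_lt (by linarith)),
      sub_zero]
    rfl
  have hVβ := fun β => integral_exp_neg_mul_one_div_mul_erlangSum (β := β) hc hlam.le
  have hWV : W =ᵐ[volume.restrict (Ici 0)] fun x => 1 / c * erlangSum (lam / c) x := by
    rw [← restrict_Ioi_eq_restrict_Ici]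
    refine ae_eq_of_forall_laplace_eq (B := 2 * (lam / c))
      (fun β hβ => .of_integral_ne_zero ?_) (fun β hβ => .of_integral_ne_zero ?_)
      fun β hβ => by rw [hWβ β hβ, hVβ β hβ]
    · rw [hWβ β hβ]; exact hψ β hβ
    · rw [hVβ β hβ]; exact hψ β hβ
  intro x hx
  rw [Int.floor_toNat]
  exact Measure.eqOn_of_ae_eq hWV hWcont
    (continuousOn_const.mul (continuousOn_erlangSum _)) (by rw [interior_Ici, closure_Ioi]) hx
end
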